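/- arXiv:1205.4645 — 11 statements merged into one kernel-verified Lean document; each statement's English description precedes it below -/
import Mathlib

section
/- Let G be a graph on vertex set {1,...,p} in which every vertex has degree at most K (G is K-sparse). Let S be a random subset of {1,...,p} in which each vertex j is included independently with probability ε ∈ (0,1). Then for any integer m ≥ 1, with probability at least 1 − p·(eεK)^{m+1}, every connected component of the subgraph of G induced on S has at most m vertices. -/
/-!
Number the neighbours of every vertex injectively by `0, …, K - 1`. If the component of `v` in
`G[S]` has more than `m` vertices, exploring it from `x 0 = v` gives distinct vertices
`x 0, …, x m` of `S`, where `x (i + 1)` is the neighbour numbered `c i % K` of `x (c i / K)` and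
`c i / K ≤ i`. Always choosing the least available code makes `c 0 < ⋯ < c (m - 1) < K m`, so the
vertices are determined by `v` and the set of codes. A union bound over these `p * C(K m, m)`
choices, each forcing `m + 1` given vertices into `S`, bounds the failure probability by
`p * C(K m, m) * ε ^ (m + 1)`, and `C(K m, m) ≤ (K m) ^ m / m! ≤ (e K) ^ m`.
-/

open MeasureTheory Set

theorem Set.Finite.exists_injOn_lt_of_ncard_le {α : Type*} {s : Set α} (hs : s.Finite) {K : ℕ}
    (h : s.ncard ≤ K) : ∃ g : α → ℕ, s.InjOn g ∧ ∀ b ∈ s, g b < K := by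
  classical
  have := hs.fintype
  obtain ⟨e⟩ : Nonempty (s ↪ Fin K) := Function.Embedding.nonempty_of_card_le <| by
    rwa [Fintype.card_fin, ← Nat.card_eq_fintype_card, Nat.card_coe_set_eq]
  refine ⟨fun b => if hb : b ∈ s then e ⟨b, hb⟩ else 0, fun a ha b hb hab => ?_, fun b hb => ?_⟩
  · simpa [ha, hb, Fin.val_inj] using hab
  · simp [hb]

theorem Nat.card_fin_orderEmbedding (m N : ℕ) : Nat.card (Fin m ↪o Fin N) = N.choose m := by
  rw [Nat.card_congr Set.powersetCard.ofFinEmbEquiv, Set.powersetCard.card, Nat.card_fin]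

theorem Nat.choose_mul_le_exp_one_mul_pow (K m : ℕ) :
    ((K * m).choose m : ℝ) ≤ (Real.exp 1 * K) ^ m :=
  calc ((K * m).choose m : ℝ) ≤ ((K * m : ℕ) : ℝ) ^ m / m.factorial := Nat.choose_le_pow_div m _
    _ = K ^ m * (m ^ m / m.factorial) := by push_cast; ring
    _ ≤ K ^ m * Real.exp m := by gcongr; exact Real.pow_div_factorial_le_exp _ (Nat.cast_nonneg m) m
    _ = (Real.exp 1 * K) ^ m := by rw [mul_pow, Real.exp_one_pow, mul_comm]

namespace SimpleGraph

variable {V : Type*} (H : SimpleGraph V) (f : V → V → ℕ) (K : ℕ)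

def CodedEdge (i c : ℕ) (x : ℕ → V) : Prop :=
  c / K ≤ i ∧ H.Adj (x (c / K)) (x (i + 1)) ∧ f (x (c / K)) (x (i + 1)) = c % K

def IsGreedyCode (r : ℕ) (n : ℕ → ℕ) (x : ℕ → V) : Prop :=
  ∀ i < r, H.CodedEdge f K i (n i) x ∧
    ∀ j ≤ i, ∀ w, H.Adj (x j) w → (∀ k ≤ i, x k ≠ w) → n i ≤ K * j + f (x j) w

def codedTreeEvent (m : ℕ) (v : V) (ν : Fin m ↪o Fin (K * m)) : Set (V → Bool) :=
  {s | ∃ x : ℕ → V, x 0 = v ∧ (Iic m).InjOn x ∧ (∀ i ≤ m, s (x i) = true) ∧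
    ∀ i : Fin m, H.CodedEdge f K i (ν i) x}

variable {H f K}

theorem codedEdge_congr {i c : ℕ} {x y : ℕ → V} (h : EqOn x y (Iic (i + 1))) :
    H.CodedEdge f K i c x ↔ H.CodedEdge f K i c y :=
  and_congr_right fun hle => by
    rw [h (show c / K ∈ Iic (i + 1) by rw [mem_Iic]; omega), h (mem_Iic.2 le_rfl)]

theorem eqOn_of_codedEdge (hf : ∀ a, (H.neighborSet a).InjOn (f a)) {m : ℕ} {ν : Fin m → ℕ}
    {x y : ℕ → V} (h0 : x 0 = y 0) (hx : ∀ i : Fin m, H.CodedEdge f K i (ν i) x)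
    (hy : ∀ i : Fin m, H.CodedEdge f K i (ν i) y) : EqOn x y (Iic m) := by
  intro i hi
  induction i using Nat.strong_induction_on with
  | _ i ih =>
    rcases i with _ | i
    · exact h0
    · rw [mem_Iic] at hi
      obtain ⟨hle, hxa, hxf⟩ := hx ⟨i, hi⟩
      obtain ⟨-, hya, hyf⟩ := hy ⟨i, hi⟩
      have hle : ν ⟨i, hi⟩ / K ≤ i := hle
      rw [ih _ (by omega) (by rw [mem_Iic]; omega)] at hxa hxf
      exact hf _ hxa hya (hxf.trans hyf.symm)

theorem exists_adj_notMem_of_lt_card {r : ℕ} {x : ℕ → V}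
    (h : r + 1 < Nat.card {w // H.Reachable (x 0) w}) :
    ∃ j ≤ r, ∃ w, H.Adj (x j) w ∧ ∀ k ≤ r, x k ≠ w := by
  obtain ⟨w, hw, hfresh⟩ : ∃ w, H.Reachable (x 0) w ∧ w ∉ x '' Iic r := by
    by_contra! hall
    have hsub : Nat.card {w // H.Reachable (x 0) w} ≤ (x '' Iic r).ncard :=
      (Nat.card_coe_set_eq {w | H.Reachable (x 0) w}).trans_le
        (ncard_le_ncard (fun w hw => hall w hw) ((finite_Iic r).image x))
    have himage := ncard_image_le (f := x) (finite_Iic r)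
    rw [ncard_Iic_nat] at himage
    omega
  obtain ⟨wk⟩ := hw
  obtain ⟨d, -, ⟨j, hj, hdj⟩, hd⟩ := wk.exists_boundary_dart (x '' Iic r) ⟨0, by simp, rfl⟩ hfresh
  exact ⟨j, hj, d.snd, hdj ▸ d.adj, fun k hk hkd => hd ⟨k, hk, hkd⟩⟩

theorem IsGreedyCode.exists_succ (hfK : ∀ a b, H.Adj a b → f a b < K) {r : ℕ} {n : ℕ → ℕ}
    {x : ℕ → V} (hx : (Iic r).InjOn x) (hg : H.IsGreedyCode f K r n x)
    (hfresh : ∃ j ≤ r, ∃ w, H.Adj (x j) w ∧ ∀ k ≤ r, x k ≠ w) :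
    ∃ (x' : ℕ → V) (n' : ℕ → ℕ), EqOn x' x (Iic r) ∧ (Iic (r + 1)).InjOn x' ∧
      H.IsGreedyCode f K (r + 1) n' x' := by
  classical
  have hcand : ∃ c, ∃ j ≤ r, ∃ w, H.Adj (x j) w ∧ (∀ k ≤ r, x k ≠ w) ∧ K * j + f (x j) w = c :=
    let ⟨j, hj, w, hjw, hw⟩ := hfresh; ⟨_, j, hj, w, hjw, hw, rfl⟩
  obtain ⟨j, hj, w, hjw, hw, hc⟩ := Nat.find_spec hcand
  set c := Nat.find hcand
  have hmin : ∀ j ≤ r, ∀ w, H.Adj (x j) w → (∀ k ≤ r, x k ≠ w) → c ≤ K * j + f (x j) w :=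
    fun j hj w hjw hw => Nat.find_min' hcand ⟨j, hj, w, hjw, hw, rfl⟩
  have hslot := hfK _ _ hjw
  have hdiv : c / K = j := by rw [← hc, Nat.mul_add_div (by omega), Nat.div_eq_of_lt hslot, add_zero]
  have hmod : c % K = f (x j) w := by rw [← hc, Nat.mul_add_mod, Nat.mod_eq_of_lt hslot]
  set x' := Function.update x (r + 1) w
  have hx' : EqOn x' x (Iic r) := fun k hk =>
    Function.update_of_ne (by rw [mem_Iic] at hk; omega) _ _
  have hx'r : x' (r + 1) = w := Function.update_self _ _ _
  refine ⟨x', Function.update n r c, hx', ?_, fun i hi => ?_⟩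
  · rw [← Order.succ_eq_add_one, Order.Iic_succ, injOn_insert (by simp)]
    refine ⟨hx.congr hx'.symm, ?_⟩
    rintro ⟨k, hk, hkw⟩
    exact hw k hk (hx' hk ▸ hkw.trans hx'r)
  rcases (show i < r ∨ i = r by omega) with hi | rfl
  · obtain ⟨hcode, hgreedy⟩ := hg i hi
    rw [Function.update_of_ne hi.ne]
    refine ⟨(codedEdge_congr fun k hk => hx' ?_).2 hcode, fun j hj w' hjw' hw' => ?_⟩
    · rw [mem_Iic] at hk ⊢; omega
    · rw [hx' (show j ≤ r by omega)] at hjw' ⊢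
      exact hgreedy j hj w' hjw' fun k hk => hx' (show k ≤ r by omega) ▸ hw' k hk
  · rw [Function.update_self]
    refine ⟨⟨hdiv ▸ hj, ?_, ?_⟩, fun j' hj' w' hjw' hw' => ?_⟩
    · rwa [hdiv, hx'r, hx' hj]
    · rw [hdiv, hx'r, hx' hj, hmod]
    · rw [hx' hj'] at hjw' ⊢
      exact hmin j' hj' w' hjw' fun k hk => hx' hk ▸ hw' k hk

theorem IsGreedyCode.lt_succ (hf : ∀ a, (H.neighborSet a).InjOn (f a))
    (hfK : ∀ a b, H.Adj a b → f a b < K) {r : ℕ} {n : ℕ → ℕ} {x : ℕ → V}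
    (hx : (Iic r).InjOn x) (hg : H.IsGreedyCode f K r n x) {i : ℕ} (hi : i + 1 < r) :
    n i < n (i + 1) := by
  obtain ⟨⟨hpi, hadji, hsloti⟩, hgreedy⟩ := hg i (by omega)
  obtain ⟨⟨hp, hadj, hslot⟩, -⟩ := hg (i + 1) hi
  have hK : 0 < K := (Nat.zero_le _).trans_lt (hfK _ _ hadj)
  have hne : x (i + 1) ≠ x (i + 1 + 1) := fun h => by
    have := hx (by rw [mem_Iic]; omega) (by rw [mem_Iic]; omega) h
    omega
  -- Either `x (i + 2)` was already a candidate at step `i`, or its code is at least `K (i + 1)`.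
  rcases (show n (i + 1) / K ≤ i ∨ n (i + 1) / K = i + 1 by omega) with hpar | hpar
  · have hfresh : ∀ k ≤ i, x k ≠ x (i + 1 + 1) := fun k hk h => by
      have := hx (by rw [mem_Iic]; omega) (by rw [mem_Iic]; omega) h
      omega
    have hle := hgreedy _ hpar _ hadj hfresh
    rw [hslot, Nat.div_add_mod] at hle
    refine hle.lt_of_ne fun heq => hne (hf _ ?_ hadj ?_)
    · rwa [heq] at hadji
    · rw [heq] at hsloti; rw [hsloti, hslot]
  · calc n i < K * (n i / K + 1) := Nat.lt_mul_div_succ _ hK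
      _ ≤ K * (n (i + 1) / K) := by rw [hpar]; gcongr
      _ ≤ n (i + 1) := Nat.mul_div_le _ _

theorem exists_isGreedyCode (hfK : ∀ a b, H.Adj a b → f a b < K) (v : V) {m : ℕ}
    (hm : m < Nat.card {w // H.Reachable v w}) :
    ∀ r ≤ m, ∃ (x : ℕ → V) (n : ℕ → ℕ), x 0 = v ∧ (Iic r).InjOn x ∧ H.IsGreedyCode f K r n x
  | 0, _ => ⟨fun _ => v, id, rfl, fun a ha b hb _ => by rw [mem_Iic] at ha hb; omega,
      fun i hi => absurd hi (Nat.not_lt_zero i)⟩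
  | r + 1, hr => by
    obtain ⟨x, n, hx0, hx, hg⟩ := exists_isGreedyCode hfK v hm r (by omega)
    obtain ⟨x', n', hx', hinj, hg'⟩ :=
      hg.exists_succ hfK hx (exists_adj_notMem_of_lt_card (by rw [hx0]; omega))
    exact ⟨x', n', (hx' (by simp)).trans hx0, hinj, hg'⟩

theorem exists_codedTree (hf : ∀ a, (H.neighborSet a).InjOn (f a))
    (hfK : ∀ a b, H.Adj a b → f a b < K) (v : V) {m : ℕ}
    (hm : m < Nat.card {w // H.Reachable v w}) :
    ∃ (x : ℕ → V) (ν : Fin m ↪o Fin (K * m)),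
      x 0 = v ∧ (Iic m).InjOn x ∧ ∀ i : Fin m, H.CodedEdge f K i (ν i) x := by
  obtain ⟨x, n, hx0, hx, hg⟩ := exists_isGreedyCode hfK v hm m le_rfl
  have hmono : StrictMonoOn n (Iio m) := strictMonoOn_of_lt_succ ordConnected_Iio
    fun i _ _ hi => hg.lt_succ hf hfK hx hi
  have hlt (i : Fin m) : n i < K * m := calc
    n i < K * (n i / K + 1) := Nat.lt_mul_div_succ _ <| by
      obtain ⟨⟨-, hadj, -⟩, -⟩ := hg i i.2
      exact (Nat.zero_le _).trans_lt (hfK _ _ hadj)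
    _ ≤ K * m := Nat.mul_le_mul_left K (by have := (hg i i.2).1.1; omega)
  exact ⟨x, OrderEmbedding.ofStrictMono (fun i => ⟨n i, hlt i⟩) fun a b hab => hmono a.2 b.2 hab,
    hx0, hx, fun i => (hg i i.2).1⟩

theorem exists_mem_codedTreeEvent (hf : ∀ a, (H.neighborSet a).InjOn (f a))
    (hfK : ∀ a b, H.Adj a b → f a b < K) {m : ℕ} {s : V → Bool} (v : {x | s x = true})
    (hv : m < Nat.card {w // (H.induce {x | s x = true}).Reachable v w}) :
    ∃ ν, s ∈ H.codedTreeEvent f K m v ν := by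
  obtain ⟨x, ν, hx0, hx, hcode⟩ := exists_codedTree (H := H.induce _) (f := fun a b => f a b)
    (fun a _ hb _ hc h => Subtype.ext (hf a hb hc h)) (fun a b hab => hfK a b hab) v hv
  exact ⟨ν, Subtype.val ∘ x, congrArg Subtype.val hx0, Subtype.val_injective.comp_injOn hx,
    fun i _ => (x i).2, hcode⟩

theorem measure_codedTreeEvent_le [Fintype V] (hf : ∀ a, (H.neighborSet a).InjOn (f a))
    (μ : V → Measure Bool) [∀ u, IsProbabilityMeasure (μ u)] {e : ENNReal}
    (he : ∀ u, μ u {true} ≤ e) {m : ℕ} (v : V) (ν : Fin m ↪o Fin (K * m)) :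
    Measure.pi μ (H.codedTreeEvent f K m v ν) ≤ e ^ (m + 1) := by
  classical
  rcases (H.codedTreeEvent f K m v ν).eq_empty_or_nonempty with h | ⟨-, x₀, h0, hinj, -, hcode⟩
  · simp [h]
  set T := (Finset.range (m + 1)).image x₀
  have hT : T.card = m + 1 := by
    rw [Finset.card_image_of_injOn fun a ha b hb hab => hinj (by simp_all) (by simp_all) hab,
      Finset.card_range]
  have hsub : H.codedTreeEvent f K m v ν ⊆ (T : Set V).pi fun _ => {true} := by
    rintro s ⟨x, hx0, -, hs, hx⟩ u hu
    obtain ⟨i, hi, rfl⟩ := Finset.mem_image.1 hu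
    rw [Finset.mem_range] at hi
    rw [← eqOn_of_codedEdge hf (hx0.trans h0.symm) hx hcode (show i ≤ m by omega)]
    exact hs i (by omega)
  calc Measure.pi μ (H.codedTreeEvent f K m v ν) ≤ ∏ u ∈ T, μ u {true} :=
        (measure_mono hsub).trans_eq (Measure.pi_pi_finset _ _ _)
    _ ≤ e ^ (m + 1) := hT ▸ Finset.prod_le_pow_card _ _ _ fun u _ => he u

theorem measure_exists_lt_card_reachable_le [Fintype V] {K : ℕ}
    (hK : ∀ v, (H.neighborSet v).ncard ≤ K) (μ : V → Measure Bool)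
    [∀ u, IsProbabilityMeasure (μ u)] {e : ENNReal} (he : ∀ u, μ u {true} ≤ e) (m : ℕ) :
    Measure.pi μ {s | ∃ v : {x | s x = true},
      m < Nat.card {w // (H.induce {x | s x = true}).Reachable v w}} ≤
      Fintype.card V * (K * m).choose m * e ^ (m + 1) := by
  choose f hf hfK using fun a => (H.neighborSet a).toFinite.exists_injOn_lt_of_ncard_le (hK a)
  have hcover : {s | ∃ v : {x | s x = true},
      m < Nat.card {w // (H.induce {x | s x = true}).Reachable v w}} ⊆
      ⋃ c : V × (Fin m ↪o Fin (K * m)), H.codedTreeEvent f K m c.1 c.2 := by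
    rintro s ⟨v, hv⟩
    obtain ⟨ν, hν⟩ := H.exists_mem_codedTreeEvent hf (fun a b hab => hfK a b hab) v hv
    exact mem_iUnion.2 ⟨(v, ν), hν⟩
  calc _ ≤ ∑ c : V × (Fin m ↪o Fin (K * m)), Measure.pi μ (H.codedTreeEvent f K m c.1 c.2) :=
        (measure_mono hcover).trans (measure_iUnion_fintype_le _ _)
    _ ≤ ∑ _c : V × (Fin m ↪o Fin (K * m)), e ^ (m + 1) :=
        Finset.sum_le_sum fun c _ => H.measure_codedTreeEvent_le hf μ he c.1 c.2
    _ = Fintype.card V * (K * m).choose m * e ^ (m + 1) := by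
        rw [Finset.sum_const, Finset.card_univ, Fintype.card_prod, ← Nat.card_eq_fintype_card
          (α := Fin m ↪o _), Nat.card_fin_orderEmbedding, nsmul_eq_mul]
        push_cast; rfl

end SimpleGraph

theorem choose_mul_pow_le_pow (K : ℕ) {m : ℕ} (hm : 1 ≤ m) {ε : ℝ} (hε : 0 ≤ ε) :
    ((K * m).choose m : ℝ) * ε ^ (m + 1) ≤ (Real.exp 1 * ε * K) ^ (m + 1) := by
  rcases Nat.eq_zero_or_pos K with rfl | hK
  · rw [zero_mul, Nat.choose_eq_zero_of_lt hm]
    simp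
  have h1 : 1 ≤ Real.exp 1 * K :=
    one_le_mul_of_one_le_of_one_le (Real.one_le_exp zero_le_one) (by exact_mod_cast hK)
  calc ((K * m).choose m : ℝ) * ε ^ (m + 1) ≤ (Real.exp 1 * K) ^ (m + 1) * ε ^ (m + 1) := by
        gcongr
        exact (Nat.choose_mul_le_exp_one_mul_pow K m).trans (pow_le_pow_right₀ h1 m.le_succ)
    _ = (Real.exp 1 * ε * K) ^ (m + 1) := by rw [← mul_pow]; ring

/-- Let `G` be a `K`-sparse graph on `{1,...,p}` (every vertex has degree at
most `K`).  Let `S` be a random subset of the vertices, each vertex included independently with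
probability `ε ∈ (0,1)`.  Then with probability at least `1 - p * (e * ε * K)^(m+1)`, every
connected component of the subgraph of `G` induced on `S` has at most `m` vertices. -/
theorem stmt_0 (p K m : ℕ) (hm : 1 ≤ m) (G : SimpleGraph (Fin p))
    (hK : ∀ v, (G.neighborSet v).ncard ≤ K)
    (ε : ℝ) (hε0 : 0 < ε) (hε1 : ε < 1) :
    1 - ENNReal.ofReal ((p : ℝ) * (Real.exp 1 * ε * K) ^ (m + 1)) ≤
      (Measure.pi fun _ : Fin p =>
        (PMF.bernoulli (Real.toNNReal ε) (Real.toNNReal_le_one.mpr hε1.le)).toMeasure)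
      {s : Fin p → Bool |
        ∀ v : {x : Fin p | s x = true},
          Nat.card {w : {x : Fin p | s x = true} //
            (SimpleGraph.induce {x : Fin p | s x = true} G).Reachable v w} ≤ m} := by
  set μ := Measure.pi fun _ : Fin p =>
    (PMF.bernoulli (Real.toNNReal ε) (Real.toNNReal_le_one.mpr hε1.le)).toMeasure
  set bad := {s : Fin p → Bool | ∃ v : {x : Fin p | s x = true},
    m < Nat.card {w // (G.induce {x | s x = true}).Reachable v w}}
  have hbern (u : Fin p) : (PMF.bernoulli (Real.toNNReal ε)
      (Real.toNNReal_le_one.mpr hε1.le)).toMeasure {true} ≤ ENNReal.ofReal ε := by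
    simp [PMF.bernoulli_apply, ENNReal.ofReal]
  have hbad : μ bad ≤ ENNReal.ofReal (p * (Real.exp 1 * ε * K) ^ (m + 1)) := calc
    μ bad ≤ p * (K * m).choose m * ENNReal.ofReal ε ^ (m + 1) := by
        simpa only [Fintype.card_fin] using G.measure_exists_lt_card_reachable_le hK _ hbern m
    _ = ENNReal.ofReal (p * ((K * m).choose m * ε ^ (m + 1))) := by
        rw [← ENNReal.ofReal_pow hε0.le, ← ENNReal.ofReal_natCast, ← ENNReal.ofReal_natCast,
          ← ENNReal.ofReal_mul (by positivity), ← ENNReal.ofReal_mul (by positivity), mul_assoc]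
    _ ≤ _ := ENNReal.ofReal_le_ofReal <|
        mul_le_mul_of_nonneg_left (choose_mul_pow_le_pow K hm hε0.le) (by positivity)
  have hgood : {s : Fin p → Bool | ∀ v : {x : Fin p | s x = true},
      Nat.card {w // (G.induce {x | s x = true}).Reachable v w} ≤ m} = badᶜ := by
    ext s; simp [bad]
  rw [hgood]
  exact tsub_le_iff_left.2 <| measure_univ.ge.trans <| (measure_univ_le_add_compl bad).trans <|
    add_le_add_left hbad _
end

section
/- Let G be an n×n real symmetric positive definite matrix and let D be an m×n real matrix of rank m, with m < n. Let U be an n×(n−m) real matrix whose columns form an orthonormal basis of the null space {ξ ∈ ℝⁿ : Dξ = 0} of D. Then D G D' and U' G⁻¹ U are invertible, and G D' (D G D')⁻¹ D G = G − U (U' G⁻¹ U)⁻¹ U'. -/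
/-!
`D G Dᵀ` and `Uᵀ G⁻¹ U` are congruences of the positive definite matrices `G` and `G⁻¹` by
injective maps (`Dᵀ` is injective by the rank condition, `U` because `Uᵀ U = 1`), hence positive
definite and invertible. For the identity, the difference `X = G - U (Uᵀ G⁻¹ U)⁻¹ Uᵀ -
G Dᵀ (D G Dᵀ)⁻¹ D G` satisfies `D X = 0` and `Uᵀ G⁻¹ X = 0`. The first puts every column of `X`
in the null space of `D`, i.e. in the range of `U`, and the second then forces it to vanish
because `Uᵀ G⁻¹ U` is invertible.
-/

open Matrix

namespace Matrix

variable {K : Type*} [Field K] {k l m n : Type*} [Fintype k] [Fintype n]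

theorem vecMul_injective_of_rank_eq_card [Fintype m] {A : Matrix m n K}
    (hA : A.rank = Fintype.card m) : Function.Injective A.vecMul := by
  rw [vecMul_injective_iff, linearIndependent_iff_card_eq_finrank_span, ← hA,
    rank_eq_finrank_span_row, Set.finrank]

theorem mulVec_injective_of_transpose_mul_eq_one [DecidableEq k] {U : Matrix n k K}
    (hU : Uᵀ * U = 1) : Function.Injective U.mulVec :=
  Function.LeftInverse.injective (g := Uᵀ.mulVec) fun c => by
    rw [mulVec_mulVec, hU, one_mulVec]

theorem eq_zero_of_mul_eq_zero_of_ker_le_range [DecidableEq k] [Fintype l] {D : Matrix m n K}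
    {U : Matrix n k K} {H : Matrix n n K} (hU : ∀ ξ, D *ᵥ ξ = 0 → ∃ c, ξ = U *ᵥ c)
    (hB : IsUnit (Uᵀ * H * U)) {X : Matrix n l K} (hDX : D * X = 0) (hUX : Uᵀ * H * X = 0) :
    X = 0 := by
  refine ext_iff_mulVec.2 fun v => ?_
  obtain ⟨c, hc⟩ := hU (X *ᵥ v) (by rw [mulVec_mulVec, hDX, zero_mulVec])
  have hc0 : (Uᵀ * H * U) *ᵥ c = 0 := by
    rw [← mulVec_mulVec, ← hc, mulVec_mulVec, hUX, zero_mulVec]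
  rw [zero_mulVec, hc, (mulVec_injective_iff_isUnit.2 hB).eq_iff' (mulVec_zero _) |>.1 hc0,
    mulVec_zero]

end Matrix

theorem stmt_1_general (n m : ℕ)
    (G : Matrix (Fin n) (Fin n) ℝ) (hG : G.PosDef)
    (D : Matrix (Fin m) (Fin n) ℝ) (hD : D.rank = m)
    (U : Matrix (Fin n) (Fin (n - m)) ℝ)
    (hUorth : Uᵀ * U = 1)
    (hUnull : D * U = 0)
    (hUspan : ∀ ξ : Fin n → ℝ, D *ᵥ ξ = 0 → ∃ c : Fin (n - m) → ℝ, ξ = U *ᵥ c) :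
    IsUnit (D * G * Dᵀ) ∧ IsUnit (Uᵀ * G⁻¹ * U) ∧
      G * Dᵀ * (D * G * Dᵀ)⁻¹ * (D * G) = G - U * (Uᵀ * G⁻¹ * U)⁻¹ * Uᵀ := by
  have hA : (D * G * Dᵀ).PosDef := by
    simpa only [conjTranspose_eq_transpose_of_trivial] using hG.mul_mul_conjTranspose_same
      (vecMul_injective_of_rank_eq_card (hD.trans (Fintype.card_fin m).symm))
  have hB : (Uᵀ * G⁻¹ * U).PosDef := by
    simpa only [conjTranspose_eq_transpose_of_trivial] using
      hG.inv.conjTranspose_mul_mul_same (mulVec_injective_of_transpose_mul_eq_one hUorth)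
  refine ⟨hA.isUnit, hB.isUnit, ?_⟩
  have hAA := mul_nonsing_inv _ ((isUnit_iff_isUnit_det _).1 hA.isUnit)
  have hBB := mul_nonsing_inv _ ((isUnit_iff_isUnit_det _).1 hB.isUnit)
  have hGG := nonsing_inv_mul _ ((isUnit_iff_isUnit_det _).1 hG.isUnit)
  have hUD : Uᵀ * Dᵀ = 0 := by rw [← transpose_mul, hUnull, transpose_zero]
  rw [eq_comm, ← sub_eq_zero]
  refine eq_zero_of_mul_eq_zero_of_ker_le_range hUspan hB.isUnit ?_ ?_
  · simp only [Matrix.mul_sub, ← Matrix.mul_assoc, hUnull, Matrix.zero_mul]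
    rw [hAA, Matrix.one_mul, sub_zero, sub_self]
  · simp only [Matrix.mul_sub, ← Matrix.mul_assoc]
    rw [Matrix.mul_assoc _ G⁻¹ G, hGG, Matrix.mul_one, hBB, Matrix.one_mul, hUD, Matrix.zero_mul,
      Matrix.zero_mul, Matrix.zero_mul, sub_self, sub_zero]

/-- Let `G` be an `n×n` symmetric positive definite real matrix and `D` an
`m×n` real matrix of full row rank `m < n`.  Let `U` be an `n×(n-m)` matrix whose columns form
an orthonormal basis of the null space `{ξ : D ξ = 0}` of `D`.  Then `D G Dᵀ` and `Uᵀ G⁻¹ U`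
are invertible, and `G Dᵀ (D G Dᵀ)⁻¹ D G = G - U (Uᵀ G⁻¹ U)⁻¹ Uᵀ`. -/
theorem stmt_1 (n m : ℕ) (hmn : m < n)
    (G : Matrix (Fin n) (Fin n) ℝ) (hG : G.PosDef)
    (D : Matrix (Fin m) (Fin n) ℝ) (hD : D.rank = m)
    (U : Matrix (Fin n) (Fin (n - m)) ℝ)
    (hUorth : Uᵀ * U = 1)
    (hUnull : D * U = 0)
    (hUspan : ∀ ξ : Fin n → ℝ, D *ᵥ ξ = 0 → ∃ c : Fin (n - m) → ℝ, ξ = U *ᵥ c) :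
    IsUnit (D * G * Dᵀ) ∧ IsUnit (Uᵀ * G⁻¹ * U) ∧
      G * Dᵀ * (D * G * Dᵀ)⁻¹ * (D * G) = G - U * (Uᵀ * G⁻¹ * U)⁻¹ * Uᵀ :=
  stmt_1_general n m G hG D hD U hUorth hUnull hUspan
end

section
/- Let α ∈ (1,2) and let g : [−π, π] → ℝ be an even function which is differentiable on [−π, 0) ∪ (0, π] and satisfies |g'(ω)| ≤ C|ω|^{−α} for all ω ∈ [−π,0) ∪ (0,π], for some constant C > 0. Then ∫_{−π}^{π} cos(ωx) g(ω) dω = O(|x|^{−(2−α)}) as x → ∞; that is, there exist constants C' > 0 and x₀ such that |∫_{−π}^{π} cos(ωx) g(ω) dω| ≤ C' x^{−(2−α)} for all x ≥ x₀. -/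
/-!
Since `g` is even, the integral is twice the integral over `(0, π]`. Integrating the bound on
`g'` from `ω` to `π` gives `|g ω| ≤ |g π| + C / (α - 1) * ω ^ (1 - α)`, so the part of the
integral over `(0, 1/x]` is `O(x ^ (α - 2))` by the trivial estimate. On `[1/x, π]` one integrates
by parts against `sin (ω x) / x`: the boundary terms and `∫ |g'|` are `O(x ^ (α - 1))`, and the
factor `1 / x` brings them down to `O(x ^ (α - 2))` as well.
-/

open Real MeasureTheory Set intervalIntegral

section

variable {f g g' : ℝ → ℝ} {α B C D a b r x : ℝ}

lemma integral_symm_eq_two_mul_of_even (hf : ∀ t ∈ uIcc 0 b, f (-t) = f t)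
    (hint : IntervalIntegrable f volume 0 b) :
    ∫ t in -b..b, f t = 2 * ∫ t in 0..b, f t := by
  have hint_neg : IntervalIntegrable f volume (-b) 0 := by
    have := IntervalIntegrable.iff_comp_neg (by finiteness) |>.mp
      ((intervalIntegrable_congr fun t ht => (hf t (uIoc_subset_uIcc ht)).symm).mp hint)
    simpa using this.symm
  have hleft : ∫ t in -b..0, f t = ∫ t in 0..b, f t := by
    simpa using (integral_comp_neg (a := 0) (b := b) f).symm.trans (integral_congr hf)
  rw [← integral_add_adjacent_intervals hint_neg hint, hleft, two_mul]

lemma abs_integral_le_of_abs_le {F : ℝ → ℝ} (hab : a ≤ b)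
    (h : ∀ t ∈ Ioc a b, |f t| ≤ F t) (hF : IntervalIntegrable F volume a b) :
    |∫ t in a..b, f t| ≤ ∫ t in a..b, F t := by
  simpa only [Real.norm_eq_abs] using norm_integral_le_of_norm_le hab
    (ae_of_all _ fun t ht => (Real.norm_eq_abs (f t)).trans_le (h t ht)) hF

lemma integral_rpow_neg_le (hα : 1 < α) (ha : 0 < a) (hab : a ≤ b) :
    ∫ t in a..b, t ^ (-α) ≤ a ^ (1 - α) / (α - 1) := by
  rw [integral_rpow (Or.inr ⟨by linarith, notMem_uIcc_of_lt ha (ha.trans_le hab)⟩),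
    show -α + 1 = -(α - 1) by ring, div_neg, ← neg_div, neg_sub,
    show -(α - 1) = 1 - α by ring]
  gcongr
  exact sub_le_self _ (rpow_nonneg (ha.trans_le hab).le _)

lemma intervalIntegrable_of_abs_le_add_rpow (hr : -1 < r) (hb : 0 ≤ b)
    (hcont : ContinuousOn f (Ioc 0 b)) (hf : ∀ t ∈ Ioc 0 b, |f t| ≤ B + D * t ^ r) :
    IntervalIntegrable f volume 0 b := by
  refine ((intervalIntegrable_const (c := B)).add
    ((intervalIntegrable_rpow' hr).const_mul D)).mono_fun' ?_ ?_
  · rw [uIoc_of_le hb]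
    exact hcont.aestronglyMeasurable measurableSet_Ioc
  · rw [uIoc_of_le hb]
    filter_upwards [ae_restrict_mem measurableSet_Ioc] with t ht
    exact hf t ht

lemma abs_integral_le_of_abs_le_add_rpow (hr : -1 < r) (hb : 0 ≤ b)
    (hf : ∀ t ∈ Ioc 0 b, |f t| ≤ B + D * t ^ r) :
    |∫ t in 0..b, f t| ≤ B * b + D * (b ^ (r + 1) / (r + 1)) := by
  have hrpow : IntervalIntegrable (fun t => D * t ^ r) volume 0 b :=
    (intervalIntegrable_rpow' hr).const_mul D
  calc |∫ t in 0..b, f t| ≤ ∫ t in 0..b, (B + D * t ^ r) :=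
        abs_integral_le_of_abs_le hb hf (intervalIntegrable_const.add hrpow)
    _ = B * b + D * (b ^ (r + 1) / (r + 1)) := by
        rw [integral_add intervalIntegrable_const hrpow, intervalIntegral.integral_const,
          intervalIntegral.integral_const_mul, integral_rpow (Or.inl hr),
          zero_rpow (by linarith), smul_eq_mul]
        ring

lemma abs_integral_cos_mul_le (hx : 0 < x) (hab : a ≤ b) (hcont : ContinuousOn g (Icc a b))
    (hderiv : ∀ t ∈ Ioo a b, HasDerivAt g (g' t) t) (hint : IntervalIntegrable g' volume a b) :
    |∫ t in a..b, cos (t * x) * g t| ≤ (|g a| + |g b| + ∫ t in a..b, |g' t|) / x := by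
  have hsin : ∀ t, HasDerivAt (fun s => sin (s * x) / x) (cos (t * x)) t := fun t => by
    simpa [hx.ne'] using ((hasDerivAt_mul_const x).sin).div_const x
  have hsin_le : ∀ t, |sin (t * x) / x| ≤ 1 / x := fun t => by
    rw [abs_div, abs_of_pos hx]
    gcongr
    exact abs_sin_le_one _
  have hibp := integral_mul_deriv_eq_deriv_mul_of_hasDerivAt (v := fun s => sin (s * x) / x)
    (by rwa [uIcc_of_le hab]) (fun t _ => (hsin t).continuousAt.continuousWithinAt)
    (by rwa [min_eq_left hab, max_eq_right hab]) (fun t _ => hsin t) hint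
    ((by fun_prop : Continuous fun t => cos (t * x)).intervalIntegrable a b)
  have hrem : |∫ t in a..b, g' t * (sin (t * x) / x)| ≤ (∫ t in a..b, |g' t|) / x := by
    rw [div_eq_mul_one_div, ← intervalIntegral.integral_mul_const]
    refine abs_integral_le_of_abs_le hab (fun t _ => ?_) (hint.abs.mul_const _)
    rw [abs_mul]
    exact mul_le_mul_of_nonneg_left (hsin_le t) (abs_nonneg _)
  simp_rw [mul_comm (cos _) (g _)]
  rw [hibp]
  calc _ ≤ |g b * (sin (b * x) / x)| + |g a * (sin (a * x) / x)|
        + |∫ t in a..b, g' t * (sin (t * x) / x)| :=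
        (abs_sub _ _).trans (by gcongr; exact abs_sub _ _)
    _ ≤ |g b| * (1 / x) + |g a| * (1 / x) + (∫ t in a..b, |g' t|) / x := by
        rw [abs_mul, abs_mul]
        gcongr <;> exact hsin_le _
    _ = _ := by ring

lemma intervalIntegrable_deriv_of_abs_le_rpow_neg (ha : 0 < a) (hab : a ≤ b)
    (hderiv : ∀ t ∈ Ioo a b, HasDerivAt g (g' t) t)
    (hbound : ∀ t ∈ Ioc a b, |g' t| ≤ C * t ^ (-α)) :
    IntervalIntegrable g' volume a b := by
  have hdom : IntervalIntegrable (fun t => C * t ^ (-α)) volume a b :=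
    (intervalIntegrable_rpow (Or.inr (notMem_uIcc_of_lt ha (ha.trans_le hab)))).const_mul C
  have hderiv_eq : EqOn (deriv g) g' (uIoo a b) := by
    rw [uIoo_of_le hab]
    exact fun t ht => (hderiv t ht).deriv
  refine (hdom.mono_fun' (measurable_deriv g).aestronglyMeasurable ?_).congr_uIoo hderiv_eq
  rw [uIoc_of_le hab, ← restrict_Ioo_eq_restrict_Ioc]
  filter_upwards [ae_restrict_mem measurableSet_Ioo] with t ht
  rw [(hderiv t ht).deriv]
  exact hbound t (Ioo_subset_Ioc_self ht)

lemma integral_abs_le_of_abs_le_rpow_neg (hα : 1 < α) (hC : 0 ≤ C) (ha : 0 < a) (hab : a ≤ b)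
    (hint : IntervalIntegrable g' volume a b)
    (hbound : ∀ t ∈ Ioc a b, |g' t| ≤ C * t ^ (-α)) :
    ∫ t in a..b, |g' t| ≤ C / (α - 1) * a ^ (1 - α) :=
  calc ∫ t in a..b, |g' t| ≤ ∫ t in a..b, C * t ^ (-α) :=
        integral_mono_on_of_le_Ioo hab hint.abs
          ((intervalIntegrable_rpow (Or.inr (notMem_uIcc_of_lt ha (ha.trans_le hab)))).const_mul C)
          fun t ht => hbound t (Ioo_subset_Ioc_self ht)
    _ = C * ∫ t in a..b, t ^ (-α) := intervalIntegral.integral_const_mul C _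
    _ ≤ C * (a ^ (1 - α) / (α - 1)) := by gcongr; exact integral_rpow_neg_le hα ha hab
    _ = C / (α - 1) * a ^ (1 - α) := by ring

lemma abs_sub_le_of_abs_deriv_le_rpow_neg (hα : 1 < α) (hC : 0 ≤ C) (ha : 0 < a) (hab : a ≤ b)
    (hcont : ContinuousOn g (Icc a b)) (hderiv : ∀ t ∈ Ioo a b, HasDerivAt g (g' t) t)
    (hbound : ∀ t ∈ Ioc a b, |g' t| ≤ C * t ^ (-α)) :
    |g b - g a| ≤ C / (α - 1) * a ^ (1 - α) := by
  have hint := intervalIntegrable_deriv_of_abs_le_rpow_neg ha hab hderiv hbound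
  rw [← integral_eq_sub_of_hasDerivAt_of_le hab hcont hderiv hint]
  exact (abs_integral_le_integral_abs hab).trans
    (integral_abs_le_of_abs_le_rpow_neg hα hC ha hab hint hbound)

lemma abs_le_add_rpow_of_abs_deriv_le_rpow_neg (hα : 1 < α) (hC : 0 ≤ C)
    (hcont : ContinuousOn g (Ioc 0 b)) (hderiv : ∀ t ∈ Ioo 0 b, HasDerivAt g (g' t) t)
    (hbound : ∀ t ∈ Ioc 0 b, |g' t| ≤ C * t ^ (-α)) {t : ℝ} (ht : t ∈ Ioc 0 b) :
    |g t| ≤ |g b| + C / (α - 1) * t ^ (1 - α) := by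
  have := abs_sub_le_of_abs_deriv_le_rpow_neg hα hC ht.1 ht.2
    (hcont.mono (Icc_subset_Ioc_iff ht.2 |>.2 ⟨ht.1, le_rfl⟩))
    (fun s hs => hderiv s ⟨ht.1.trans hs.1, hs.2⟩)
    (fun s hs => hbound s ⟨ht.1.trans hs.1, hs.2⟩)
  linarith [(abs_sub_abs_le_abs_sub (g t) (g b)).trans_eq (abs_sub_comm _ _)]

lemma intervalIntegrable_of_abs_deriv_le_rpow_neg (hα1 : 1 < α) (hα2 : α < 2) (hC : 0 ≤ C)
    (hb : 0 ≤ b) (hcont : ContinuousOn g (Ioc 0 b))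
    (hderiv : ∀ t ∈ Ioo 0 b, HasDerivAt g (g' t) t)
    (hbound : ∀ t ∈ Ioc 0 b, |g' t| ≤ C * t ^ (-α)) :
    IntervalIntegrable g volume 0 b :=
  intervalIntegrable_of_abs_le_add_rpow (r := 1 - α) (by linarith) hb hcont
    fun _ ht => abs_le_add_rpow_of_abs_deriv_le_rpow_neg hα1 hC hcont hderiv hbound ht

lemma abs_integral_cos_mul_le_of_abs_deriv_le_rpow_neg (hα : 1 < α) (hC : 0 ≤ C) (hx : 0 < x)
    (hcont : ContinuousOn g (Ioc 0 b)) (hderiv : ∀ t ∈ Ioo 0 b, HasDerivAt g (g' t) t)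
    (hbound : ∀ t ∈ Ioc 0 b, |g' t| ≤ C * t ^ (-α)) (ha : a ∈ Ioc 0 b) :
    |∫ t in a..b, cos (t * x) * g t| ≤ 2 * (|g b| + C / (α - 1) * a ^ (1 - α)) / x := by
  have hderiv' : ∀ t ∈ Ioo a b, HasDerivAt g (g' t) t :=
    fun t ht => hderiv t ⟨ha.1.trans ht.1, ht.2⟩
  have hbound' : ∀ t ∈ Ioc a b, |g' t| ≤ C * t ^ (-α) :=
    fun t ht => hbound t ⟨ha.1.trans ht.1, ht.2⟩
  have hint := intervalIntegrable_deriv_of_abs_le_rpow_neg ha.1 ha.2 hderiv' hbound'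
  refine (abs_integral_cos_mul_le hx ha.2
    (hcont.mono (Icc_subset_Ioc_iff ha.2 |>.2 ⟨ha.1, le_rfl⟩)) hderiv' hint).trans ?_
  have := integral_abs_le_of_abs_le_rpow_neg hα hC ha.1 ha.2 hint hbound'
  have := abs_le_add_rpow_of_abs_deriv_le_rpow_neg hα hC hcont hderiv hbound ha
  gcongr
  linarith

lemma abs_integral_cos_mul_le_rpow (hα1 : 1 < α) (hα2 : α < 2) (hC : 0 ≤ C)
    (hcont : ContinuousOn g (Ioc 0 b)) (hderiv : ∀ t ∈ Ioo 0 b, HasDerivAt g (g' t) t)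
    (hbound : ∀ t ∈ Ioc 0 b, |g' t| ≤ C * t ^ (-α)) (hx : 0 < x) (hxb : x⁻¹ ≤ b) :
    |∫ t in 0..b, cos (t * x) * g t|
      ≤ 3 * |g b| * x⁻¹ + C / (α - 1) * (2 + 1 / (2 - α)) * x ^ (-(2 - α)) := by
  set D := C / (α - 1)
  have hε : x⁻¹ ∈ Ioc 0 b := ⟨inv_pos.2 hx, hxb⟩
  have hf : IntervalIntegrable (fun t => cos (t * x) * g t) volume 0 b :=
    (intervalIntegrable_of_abs_deriv_le_rpow_neg hα1 hα2 hC (hε.1.le.trans hxb) hcont hderiv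
      hbound).continuousOn_mul (by fun_prop)
  have hnear := abs_integral_le_of_abs_le_add_rpow (r := 1 - α) (f := fun t => cos (t * x) * g t)
    (B := |g b|) (D := D) (by linarith) hε.1.le fun t ht => by
      rw [abs_mul]
      exact (mul_le_of_le_one_left (abs_nonneg _) (abs_cos_le_one _)).trans
        (abs_le_add_rpow_of_abs_deriv_le_rpow_neg hα1 hC hcont hderiv hbound
          ⟨ht.1, ht.2.trans hxb⟩)
  have hfar := abs_integral_cos_mul_le_of_abs_deriv_le_rpow_neg hα1 hC hx hcont hderiv hbound hε
  have hpow : x⁻¹ ^ (1 - α + 1) = x ^ (-(2 - α)) := by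
    rw [inv_rpow hx.le, rpow_neg hx.le]
    ring_nf
  have hpow' : x⁻¹ ^ (1 - α) / x = x ^ (-(2 - α)) := by
    rw [← hpow, rpow_add_one (inv_pos.2 hx).ne', div_eq_mul_inv]
  have hmem : x⁻¹ ∈ uIcc 0 b := Icc_subset_uIcc (Ioc_subset_Icc_self hε)
  rw [← integral_add_adjacent_intervals (hf.mono_set (uIcc_subset_uIcc_left hmem))
    (hf.mono_set (uIcc_subset_uIcc_right hmem))]
  calc _ ≤ _ := abs_add_le _ _
    _ ≤ |g b| * x⁻¹ + D * (x⁻¹ ^ (1 - α + 1) / (1 - α + 1))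
        + 2 * (|g b| + D * x⁻¹ ^ (1 - α)) / x := add_le_add hnear hfar
    _ = _ := by
        rw [hpow, mul_div_assoc, mul_add, add_div, mul_div_assoc, hpow', div_eq_mul_inv,
          show 1 - α + 1 = 2 - α by ring]
        ring

end

/-- Let `α ∈ (1,2)` and `g : [−π,π] → ℝ` be even, differentiable on
`[−π,0) ∪ (0,π]` with `|g'(ω)| ≤ C |ω|^{−α}` there.  Then
`∫_{−π}^{π} cos(ωx) g(ω) dω = O(x^{−(2−α)})` as `x → ∞`. -/
theorem stmt_7 (α C : ℝ) (hα1 : 1 < α) (hα2 : α < 2) (hC : 0 < C)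
    (g g' : ℝ → ℝ)
    (heven : ∀ ω ∈ Set.Icc (-Real.pi) Real.pi, g (-ω) = g ω)
    (hderiv : ∀ ω ∈ Set.Icc (-Real.pi) Real.pi \ {0},
      HasDerivWithinAt g (g' ω) (Set.Icc (-Real.pi) Real.pi \ {0}) ω)
    (hbound : ∀ ω ∈ Set.Icc (-Real.pi) Real.pi \ {0}, |g' ω| ≤ C * |ω| ^ (-α)) :
    ∃ C' > 0, ∃ x₀ : ℝ, ∀ x ≥ x₀,
      |∫ ω in (-Real.pi)..Real.pi, Real.cos (ω * x) * g ω| ≤ C' * x ^ (-(2 - α)) := by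
  have hsub : Ioc 0 π ⊆ Icc (-π) π \ {0} := fun t ht =>
    ⟨⟨by linarith [ht.1, pi_pos], ht.2⟩, ht.1.ne'⟩
  have hcont : ContinuousOn g (Ioc 0 π) := fun t ht =>
    (hderiv t (hsub ht)).continuousWithinAt.mono hsub
  have hderiv' : ∀ t ∈ Ioo 0 π, HasDerivAt g (g' t) t := fun t ht =>
    (hderiv t (hsub (Ioo_subset_Ioc_self ht))).hasDerivAt
      (Filter.mem_of_superset (Ioo_mem_nhds ht.1 ht.2) (Ioo_subset_Ioc_self.trans hsub))
  have hbound' : ∀ t ∈ Ioc 0 π, |g' t| ≤ C * t ^ (-α) := fun t ht => by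
    simpa [abs_of_pos ht.1] using hbound t (hsub ht)
  have hK : 0 < 3 * |g π| + C / (α - 1) * (2 + 1 / (2 - α)) := by
    have := sub_pos.2 hα1; have := sub_pos.2 hα2; positivity
  refine ⟨2 * (3 * |g π| + C / (α - 1) * (2 + 1 / (2 - α))), by positivity, 1, fun x hx => ?_⟩
  have hx0 : 0 < x := by linarith
  have hinv : x⁻¹ ≤ x ^ (-(2 - α)) := by
    rw [← rpow_neg_one]
    exact rpow_le_rpow_of_exponent_le hx (by linarith)
  have hf : IntervalIntegrable (fun ω => cos (ω * x) * g ω) volume 0 π :=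
    (intervalIntegrable_of_abs_deriv_le_rpow_neg hα1 hα2 hC.le pi_pos.le hcont hderiv'
      hbound').continuousOn_mul (by fun_prop)
  have heven' : ∀ t ∈ uIcc 0 π, cos (-t * x) * g (-t) = cos (t * x) * g t := fun t ht => by
    rw [uIcc_of_le pi_pos.le] at ht
    rw [neg_mul, cos_neg, heven t ⟨by linarith [ht.1, pi_pos], ht.2⟩]
  have hhalf := abs_integral_cos_mul_le_rpow hα1 hα2 hC.le hcont hderiv' hbound' hx0
    ((inv_le_one_of_one_le₀ hx).trans (by linarith [pi_gt_three]))
  rw [integral_symm_eq_two_mul_of_even heven' hf, abs_mul, abs_two, mul_assoc]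
  gcongr
  nlinarith [mul_le_mul_of_nonneg_left hinv (abs_nonneg (g π))]
end

section
/- Let φ ∈ (0, 1/2) and let f* : [−π, π] → ℝ be a positive, even, continuous function which is twice differentiable on [−π,0) ∪ (0,π] and satisfies |(f*)''(ω)| ≤ C|ω|^{−2} for ω ≠ 0. Define f(ω) = |1 − e^{√(−1)ω}|^{−2φ} f*(ω). Then there exists a constant C' > 0 such that for all ω ∈ [−π,π] \ {0}: |(f*)'(ω)| ≤ C'|ω|^{−1}, |f*(ω)| ≤ C', |f'(ω)| ≤ C'|ω|^{−(2φ+1)}, and |f''(ω)| ≤ C'|ω|^{−(2φ+2)}. -/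
/-- The spectral density of a long-memory process with memory parameter `φ`:
`f(ω) = |1 − e^{iω}|^{−2φ} f*(ω)`. -/
noncomputable def lmSpectral (φ : ℝ) (fstar : ℝ → ℝ) (ω : ℝ) : ℝ :=
  ‖1 - Complex.exp (Complex.I * (ω : ℂ))‖ ^ (-(2 * φ)) * fstar ω

/-!
Off the origin, `f*` is bounded by compactness, and comparing `f*` on `[ω/2, ω]` with its tangent
line at `ω` turns `|f*| ≤ M` and `|(f*)''| ≤ C|ω|^{-2}` into `|(f*)'(ω)| ≤ (4M + 2C)/|ω|`.
The factor `|1 - e^{iω}|^{-2φ} = (2 - 2 cos ω)^{-φ}` and its first two derivatives are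
`O(|ω|^{-2φ-k})`, because `2 - 2 cos ω ≥ 4ω²/π²` on `[-π, π]`; the Leibniz rule then bounds
`f'` and `f''`.
-/

open Set Real

lemma abs_mul_le_of_le {a b A B : ℝ} (ha : |a| ≤ A) (hb : |b| ≤ B) : |a * b| ≤ A * B := by
  rw [abs_mul]
  exact mul_le_mul ha hb (abs_nonneg _) ((abs_nonneg _).trans ha)

lemma abs_deriv_le_of_abs_le_of_abs_deriv2_le {g g' g'' : ℝ → ℝ} {a b M K : ℝ} (hab : a ≠ b)
    (hg : ∀ x ∈ uIcc a b, HasDerivWithinAt g (g' x) (uIcc a b) x)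
    (hg' : ∀ x ∈ uIcc a b, HasDerivWithinAt g' (g'' x) (uIcc a b) x)
    (hM : ∀ x ∈ uIcc a b, |g x| ≤ M) (hK : ∀ x ∈ uIcc a b, |g'' x| ≤ K) :
    |g' b| ≤ 2 * M / |b - a| + K * |b - a| := by
  have hK0 : 0 ≤ K := (abs_nonneg _).trans (hK b right_mem_uIcc)
  have hd : 0 < |b - a| := abs_pos.mpr (sub_ne_zero.mpr hab.symm)
  have hslope : ∀ x ∈ uIcc a b, ‖g' x - g' b‖ ≤ K * |b - a| := fun x hx =>
    calc ‖g' x - g' b‖ ≤ K * ‖x - b‖ :=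
          Convex.norm_image_sub_le_of_norm_hasDerivWithin_le hg' hK (convex_uIcc a b)
            right_mem_uIcc hx
      _ ≤ K * |b - a| := by
          rw [Real.norm_eq_abs, abs_sub_comm]
          exact mul_le_mul_of_nonneg_left (abs_sub_right_of_mem_uIcc hx) hK0
  have htangent : |g a - g b - g' b * (a - b)| ≤ K * |b - a| * |a - b| := by
    have h := Convex.norm_image_sub_le_of_norm_hasDerivWithin_le (f := fun x => g x - g' b * x)
      (fun x hx => (hg x hx).sub ((hasDerivWithinAt_id x _).const_mul (g' b)) |>.congr_deriv
        (by ring)) hslope (convex_uIcc a b) right_mem_uIcc left_mem_uIcc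
    rw [Real.norm_eq_abs, Real.norm_eq_abs] at h
    convert h using 2
    ring
  have hprod : |g' b| * |b - a| ≤ 2 * M + K * |b - a| ^ 2 :=
    calc |g' b| * |b - a| = |(g a - g b) - (g a - g b - g' b * (a - b))| := by
          rw [abs_sub_comm b a, ← abs_mul]; ring_nf
      _ ≤ (|g a| + |g b|) + K * |b - a| * |a - b| :=
          (abs_sub _ _).trans (add_le_add (abs_sub _ _) htangent)
      _ ≤ 2 * M + K * |b - a| ^ 2 := by
          rw [abs_sub_comm a b]
          linarith [hM a left_mem_uIcc, hM b right_mem_uIcc]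
  rw [div_add' _ _ _ hd.ne', le_div_iff₀ hd]
  linarith

lemma abs_mem_Icc_of_mem_uIcc_half {x ω : ℝ} (hx : x ∈ uIcc (ω / 2) ω) :
    |x| ∈ Icc (|ω| / 2) |ω| := by
  rcases le_total 0 ω with hω | hω
  · rw [uIcc_of_le (by linarith)] at hx
    rw [abs_of_nonneg hω, abs_of_nonneg (by linarith [hx.1])]
    exact ⟨hx.1, hx.2⟩
  · rw [uIcc_of_ge (by linarith)] at hx
    rw [abs_of_nonpos hω, abs_of_nonpos (by linarith [hx.2])]
    constructor <;> linarith [hx.1, hx.2]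

lemma abs_deriv_le_of_abs_deriv2_le_rpow {g g' g'' : ℝ → ℝ} {M C ω : ℝ} (hC : 0 ≤ C)
    (hω : ω ≠ 0)
    (hg : ∀ x ∈ uIcc (ω / 2) ω, HasDerivWithinAt g (g' x) (uIcc (ω / 2) ω) x)
    (hg' : ∀ x ∈ uIcc (ω / 2) ω, HasDerivWithinAt g' (g'' x) (uIcc (ω / 2) ω) x)
    (hM : ∀ x ∈ uIcc (ω / 2) ω, |g x| ≤ M)
    (hK : ∀ x ∈ uIcc (ω / 2) ω, |g'' x| ≤ C * |x| ^ (-(2 : ℝ))) :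
    |g' ω| ≤ (4 * M + 2 * C) * |ω| ^ (-(1 : ℝ)) := by
  have hω2 : 0 < |ω| / 2 := by positivity
  have h := abs_deriv_le_of_abs_le_of_abs_deriv2_le (K := C * (|ω| / 2) ^ (-(2 : ℝ)))
    (by contrapose! hω; linarith) hg hg' hM fun x hx => (hK x hx).trans <|
      mul_le_mul_of_nonneg_left
        (rpow_le_rpow_of_nonpos hω2 (abs_mem_Icc_of_mem_uIcc_half hx).1 (by norm_num)) hC
  rw [show ω - ω / 2 = ω / 2 by ring, abs_div, abs_two] at h
  convert h using 1
  rw [rpow_neg hω2.le, rpow_neg (abs_nonneg ω), rpow_one, rpow_two]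
  field_simp
  ring

-- `lmSpectral φ f` is definitionally `fun ω => lmFactor φ ω * f ω`.
noncomputable def lmFactor (φ ω : ℝ) : ℝ :=
  ‖1 - Complex.exp (Complex.I * (ω : ℂ))‖ ^ (-(2 * φ))

noncomputable def lmFactorDeriv (φ ω : ℝ) : ℝ :=
  -(2 * φ) * sin ω * (2 - 2 * cos ω) ^ (-(φ + 1))

noncomputable def lmFactorDeriv2 (φ ω : ℝ) : ℝ :=
  -(2 * φ) * cos ω * (2 - 2 * cos ω) ^ (-(φ + 1)) +
    4 * φ * (φ + 1) * sin ω ^ 2 * (2 - 2 * cos ω) ^ (-(φ + 2))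

lemma lmFactor_eq (φ : ℝ) : lmFactor φ = fun ω => (2 - 2 * cos ω) ^ (-φ) := by
  ext ω
  have hcos : cos ω = 1 - 2 * sin (ω / 2) ^ 2 := by
    rw [← cos_two_mul_eq_one_sub, mul_div_cancel₀ _ two_ne_zero]
  rw [lmFactor, norm_sub_rev, Complex.norm_exp_I_mul_ofReal_sub_one, Real.norm_eq_abs,
    show -(2 * φ) = 2 * -φ by ring, rpow_mul (abs_nonneg _), rpow_two, sq_abs, hcos]
  ring_nf

lemma hasDerivAt_two_sub_two_cos (ω : ℝ) :
    HasDerivAt (fun s => 2 - 2 * cos s) (2 * sin ω) ω := by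
  simpa using ((hasDerivAt_cos ω).const_mul 2).const_sub 2

lemma hasDerivAt_lmFactor (φ : ℝ) {ω : ℝ} (hω : cos ω ≠ 1) :
    HasDerivAt (lmFactor φ) (lmFactorDeriv φ ω) ω := by
  have hr : 2 - 2 * cos ω ≠ 0 := by contrapose! hω; linarith
  rw [lmFactor_eq]
  refine ((hasDerivAt_two_sub_two_cos ω).rpow_const (p := -φ) (Or.inl hr)).congr_deriv ?_
  rw [lmFactorDeriv, show -φ - 1 = -(φ + 1) by ring]
  ring

lemma hasDerivAt_lmFactorDeriv (φ : ℝ) {ω : ℝ} (hω : cos ω ≠ 1) :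
    HasDerivAt (lmFactorDeriv φ) (lmFactorDeriv2 φ ω) ω := by
  have hr : 2 - 2 * cos ω ≠ 0 := by contrapose! hω; linarith
  refine (((hasDerivAt_sin ω).const_mul (-(2 * φ))).mul
    ((hasDerivAt_two_sub_two_cos ω).rpow_const (p := -(φ + 1)) (Or.inl hr))).congr_deriv ?_
  rw [lmFactorDeriv2, show -(φ + 1) - 1 = -(φ + 2) by ring]
  ring

lemma four_div_pi_sq_mul_sq_le_two_sub_two_cos {ω : ℝ} (hω : |ω| ≤ π) :
    4 / π ^ 2 * ω ^ 2 ≤ 2 - 2 * cos ω := by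
  have h := cos_le_one_sub_mul_cos_sq hω
  linarith [show 4 / π ^ 2 * ω ^ 2 = 2 * (2 / π ^ 2 * ω ^ 2) by ring]

lemma abs_two_sub_two_cos_rpow_neg_le {ω s : ℝ} (hω0 : ω ≠ 0) (hω : |ω| ≤ π) (hs : 0 ≤ s) :
    |(2 - 2 * cos ω) ^ (-s)| ≤ (π ^ 2 / 4) ^ s * |ω| ^ (-(2 * s)) := by
  rw [abs_of_nonneg (rpow_nonneg (by linarith [cos_le_one ω]) _)]
  have hpos : 0 < 4 / π ^ 2 * ω ^ 2 := by have := pi_pos; positivity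
  calc (2 - 2 * cos ω) ^ (-s) ≤ (4 / π ^ 2 * ω ^ 2) ^ (-s) :=
        rpow_le_rpow_of_nonpos hpos (four_div_pi_sq_mul_sq_le_two_sub_two_cos hω) (by linarith)
    _ = (π ^ 2 / 4) ^ s * |ω| ^ (-(2 * s)) := by
        rw [mul_rpow (by positivity) (by positivity), ← sq_abs ω, ← rpow_two |ω|,
          ← rpow_mul (abs_nonneg ω), rpow_neg (by positivity), ← inv_rpow (by positivity),
          inv_div]
        ring_nf

section Bounds

variable {φ ω : ℝ} (hφ : 0 ≤ φ) (hω0 : ω ≠ 0) (hω : |ω| ≤ π)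
include hφ hω0 hω

lemma abs_lmFactor_le : |lmFactor φ ω| ≤ (π ^ 2 / 4) ^ φ * |ω| ^ (-(2 * φ)) := by
  rw [lmFactor_eq]
  exact abs_two_sub_two_cos_rpow_neg_le hω0 hω hφ

lemma abs_lmFactorDeriv_le :
    |lmFactorDeriv φ ω| ≤ 2 * φ * (π ^ 2 / 4) ^ (φ + 1) * |ω| ^ (-(2 * φ + 1)) := by
  have h2φ : |-(2 * φ)| ≤ 2 * φ := by rw [abs_neg, abs_of_nonneg (by linarith)]
  calc |lmFactorDeriv φ ω|
      ≤ 2 * φ * |ω| * ((π ^ 2 / 4) ^ (φ + 1) * |ω| ^ (-(2 * (φ + 1)))) :=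
        abs_mul_le_of_le (abs_mul_le_of_le h2φ abs_sin_le_abs)
          (abs_two_sub_two_cos_rpow_neg_le hω0 hω (by linarith))
    _ = 2 * φ * (π ^ 2 / 4) ^ (φ + 1) * |ω| ^ (-(2 * φ + 1)) := by
        rw [show -(2 * φ + 1) = 1 + -(2 * (φ + 1)) by ring, rpow_add (abs_pos.mpr hω0),
          rpow_one]
        ring

lemma abs_lmFactorDeriv2_le :
    |lmFactorDeriv2 φ ω| ≤
      (2 * φ * (π ^ 2 / 4) ^ (φ + 1) + 4 * φ * (φ + 1) * (π ^ 2 / 4) ^ (φ + 2)) *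
        |ω| ^ (-(2 * φ + 2)) := by
  have h2φ : |-(2 * φ)| ≤ 2 * φ := by rw [abs_neg, abs_of_nonneg (by linarith)]
  have h4φ : |4 * φ * (φ + 1)| ≤ 4 * φ * (φ + 1) := (abs_of_nonneg (by positivity)).le
  have hsin : |sin ω ^ 2| ≤ |ω| ^ 2 := by
    rw [abs_pow]; exact pow_le_pow_left₀ (abs_nonneg _) abs_sin_le_abs 2
  calc |lmFactorDeriv2 φ ω|
      ≤ 2 * φ * 1 * ((π ^ 2 / 4) ^ (φ + 1) * |ω| ^ (-(2 * (φ + 1)))) +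
          4 * φ * (φ + 1) * |ω| ^ 2 * ((π ^ 2 / 4) ^ (φ + 2) * |ω| ^ (-(2 * (φ + 2)))) :=
        (abs_add_le _ _).trans <| add_le_add
          (abs_mul_le_of_le (abs_mul_le_of_le h2φ (abs_cos_le_one ω))
            (abs_two_sub_two_cos_rpow_neg_le hω0 hω (by linarith)))
          (abs_mul_le_of_le (abs_mul_le_of_le h4φ hsin)
            (abs_two_sub_two_cos_rpow_neg_le hω0 hω (by linarith)))
    _ = _ := by
        rw [show -(2 * (φ + 1)) = -(2 * φ + 2) by ring,
          show -(2 * (φ + 2)) = -2 + -(2 * φ + 2) by ring, rpow_add (abs_pos.mpr hω0),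
          rpow_neg (abs_nonneg ω) 2, rpow_two]
        field_simp

end Bounds

lemma exists_lmFactor_bounds {φ : ℝ} (hφ : 0 ≤ φ) :
    ∃ A, 0 ≤ A ∧ ∀ ω ∈ Icc (-π) π \ {0},
      |lmFactor φ ω| ≤ A * |ω| ^ (-(2 * φ)) ∧ |lmFactorDeriv φ ω| ≤ A * |ω| ^ (-(2 * φ + 1)) ∧
        |lmFactorDeriv2 φ ω| ≤ A * |ω| ^ (-(2 * φ + 2)) := by
  set c0 := (π ^ 2 / 4) ^ φ
  set c1 := 2 * φ * (π ^ 2 / 4) ^ (φ + 1)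
  set c2 := 2 * φ * (π ^ 2 / 4) ^ (φ + 1) + 4 * φ * (φ + 1) * (π ^ 2 / 4) ^ (φ + 2)
  have hc0 : 0 ≤ c0 := by positivity
  have hc1 : 0 ≤ c1 := by positivity
  have hc2 : 0 ≤ c2 := by positivity
  refine ⟨c0 + c1 + c2, by positivity, fun ω hω' => ?_⟩
  have hω : |ω| ≤ π := abs_le.mpr hω'.1
  have hω0 : ω ≠ 0 := hω'.2
  refine ⟨(abs_lmFactor_le hφ hω0 hω).trans ?_, (abs_lmFactorDeriv_le hφ hω0 hω).trans ?_,
    (abs_lmFactorDeriv2_le hφ hω0 hω).trans ?_⟩ <;>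
  exact mul_le_mul_of_nonneg_right (by linarith) (rpow_nonneg (abs_nonneg ω) _)

lemma uIcc_half_subset_Icc_diff_zero {ω : ℝ} (hω : ω ∈ Icc (-π) π \ {0}) :
    uIcc (ω / 2) ω ⊆ Icc (-π) π \ {0} := by
  intro x hx
  have ⟨hωx, hxω⟩ := abs_mem_Icc_of_mem_uIcc_half hx
  have hω0 : 0 < |ω| := abs_pos.mpr hω.2
  exact ⟨abs_le.mp (hxω.trans (abs_le.mpr hω.1)), abs_pos.mp (by linarith)⟩

lemma cos_ne_one_of_mem_Icc_diff_zero {ω : ℝ} (hω : ω ∈ Icc (-π) π \ {0}) : cos ω ≠ 1 := by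
  rw [Ne, cos_eq_one_iff_of_lt_of_lt (by linarith [hω.1.1, pi_pos])
    (by linarith [hω.1.2, pi_pos])]
  exact hω.2

section Leibniz

variable {x α A B u u' u'' v v' v'' : ℝ} (hx : 0 < x) (hu : |u| ≤ A * x ^ (-α))
  (hu' : |u'| ≤ A * x ^ (-(α + 1))) (hv : |v| ≤ B) (hv' : |v'| ≤ B * x ^ (-(1 : ℝ)))
include hx hu hu' hv hv'

lemma abs_deriv_mul_le_of_rpow_bounds : |u' * v + u * v'| ≤ 2 * A * B * x ^ (-(α + 1)) :=
  calc |u' * v + u * v'| ≤ A * x ^ (-(α + 1)) * B + A * x ^ (-α) * (B * x ^ (-(1 : ℝ))) :=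
        (abs_add_le _ _).trans (add_le_add (abs_mul_le_of_le hu' hv) (abs_mul_le_of_le hu hv'))
    _ = 2 * A * B * x ^ (-(α + 1)) := by
        rw [rpow_neg hx.le, rpow_neg hx.le, rpow_neg hx.le, rpow_one, rpow_add_one hx.ne']
        field_simp
        ring

lemma abs_deriv2_mul_le_of_rpow_bounds (hu'' : |u''| ≤ A * x ^ (-(α + 2)))
    (hv'' : |v''| ≤ B * x ^ (-(2 : ℝ))) :
    |u'' * v + u' * v' + (u' * v' + u * v'')| ≤ 4 * A * B * x ^ (-(α + 2)) :=
  calc |u'' * v + u' * v' + (u' * v' + u * v'')|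
      ≤ A * x ^ (-(α + 2)) * B + A * x ^ (-(α + 1)) * (B * x ^ (-(1 : ℝ))) +
          (A * x ^ (-(α + 1)) * (B * x ^ (-(1 : ℝ))) + A * x ^ (-α) * (B * x ^ (-(2 : ℝ)))) :=
        (abs_add_le _ _).trans <| add_le_add
          ((abs_add_le _ _).trans <|
            add_le_add (abs_mul_le_of_le hu'' hv) (abs_mul_le_of_le hu' hv'))
          ((abs_add_le _ _).trans <|
            add_le_add (abs_mul_le_of_le hu' hv') (abs_mul_le_of_le hu hv''))
    _ = 4 * A * B * x ^ (-(α + 2)) := by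
        rw [rpow_neg hx.le, rpow_neg hx.le, rpow_neg hx.le, rpow_neg hx.le, rpow_neg hx.le,
          rpow_one, rpow_two, rpow_add_one hx.ne', rpow_add hx, rpow_two]
        field_simp
        ring

end Leibniz

theorem stmt_8_general (φ C : ℝ) (hφ1 : 0 < φ) (hC : 0 < C)
    (fstar d1 d2 : ℝ → ℝ)
    (hcont : ContinuousOn fstar (Set.Icc (-Real.pi) Real.pi))
    (hd1 : ∀ ω ∈ Set.Icc (-Real.pi) Real.pi \ {0},
      HasDerivWithinAt fstar (d1 ω) (Set.Icc (-Real.pi) Real.pi \ {0}) ω)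
    (hd2 : ∀ ω ∈ Set.Icc (-Real.pi) Real.pi \ {0},
      HasDerivWithinAt d1 (d2 ω) (Set.Icc (-Real.pi) Real.pi \ {0}) ω)
    (hbd2 : ∀ ω ∈ Set.Icc (-Real.pi) Real.pi \ {0}, |d2 ω| ≤ C * |ω| ^ (-(2 : ℝ))) :
    ∃ C' > 0, ∃ fd1 fd2 : ℝ → ℝ,
      (∀ ω ∈ Set.Icc (-Real.pi) Real.pi \ {0},
        HasDerivWithinAt (lmSpectral φ fstar) (fd1 ω) (Set.Icc (-Real.pi) Real.pi \ {0}) ω) ∧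
      (∀ ω ∈ Set.Icc (-Real.pi) Real.pi \ {0},
        HasDerivWithinAt fd1 (fd2 ω) (Set.Icc (-Real.pi) Real.pi \ {0}) ω) ∧
      (∀ ω ∈ Set.Icc (-Real.pi) Real.pi \ {0},
        |d1 ω| ≤ C' * |ω| ^ (-(1 : ℝ)) ∧ |fstar ω| ≤ C' ∧
        |fd1 ω| ≤ C' * |ω| ^ (-(2 * φ + 1)) ∧ |fd2 ω| ≤ C' * |ω| ^ (-(2 * φ + 2))) := by
  set S := Set.Icc (-Real.pi) Real.pi \ {0}
  obtain ⟨M, hM⟩ := isCompact_Icc.exists_bound_of_continuousOn hcont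
  have hM0 : 0 ≤ M := (norm_nonneg _).trans (hM 0 ⟨by linarith [pi_pos], pi_pos.le⟩)
  set B := 4 * M + 2 * C
  have hd1_le : ∀ ω ∈ S, |d1 ω| ≤ B * |ω| ^ (-(1 : ℝ)) := fun ω hω =>
    have hsub := uIcc_half_subset_Icc_diff_zero hω
    abs_deriv_le_of_abs_deriv2_le_rpow hC.le hω.2 (fun x hx => (hd1 x (hsub hx)).mono hsub)
      (fun x hx => (hd2 x (hsub hx)).mono hsub) (fun x hx => hM x (hsub hx).1)
      (fun x hx => hbd2 x (hsub hx))
  have hP : ∀ ω ∈ S, HasDerivWithinAt (lmFactor φ) (lmFactorDeriv φ ω) S ω := fun ω hω =>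
    (hasDerivAt_lmFactor φ (cos_ne_one_of_mem_Icc_diff_zero hω)).hasDerivWithinAt
  have hP' : ∀ ω ∈ S, HasDerivWithinAt (lmFactorDeriv φ) (lmFactorDeriv2 φ ω) S ω := fun ω hω =>
    (hasDerivAt_lmFactorDeriv φ (cos_ne_one_of_mem_Icc_diff_zero hω)).hasDerivWithinAt
  obtain ⟨A, hA0, hA⟩ := exists_lmFactor_bounds hφ1.le
  refine ⟨B + 4 * A * B, by positivity,
    fun ω => lmFactorDeriv φ ω * fstar ω + lmFactor φ ω * d1 ω,
    fun ω => lmFactorDeriv2 φ ω * fstar ω + lmFactorDeriv φ ω * d1 ω +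
      (lmFactorDeriv φ ω * d1 ω + lmFactor φ ω * d2 ω),
    fun ω hω => (hP ω hω).mul (hd1 ω hω),
    fun ω hω => ((hP' ω hω).mul (hd1 ω hω)).add ((hP ω hω).mul (hd2 ω hω)), fun ω hω => ?_⟩
  obtain ⟨hu, hu', hu''⟩ := hA ω hω
  have hx : 0 < |ω| := abs_pos.mpr hω.2
  have hv : |fstar ω| ≤ B := (hM ω hω.1).trans (by linarith)
  have hv'' : |d2 ω| ≤ B * |ω| ^ (-(2 : ℝ)) :=
    (hbd2 ω hω).trans (mul_le_mul_of_nonneg_right (by linarith) (rpow_nonneg hx.le _))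
  have hBC' : B ≤ B + 4 * A * B := by nlinarith
  refine ⟨(hd1_le ω hω).trans (mul_le_mul_of_nonneg_right hBC' (rpow_nonneg hx.le _)),
    hv.trans hBC', (abs_deriv_mul_le_of_rpow_bounds hx hu hu' hv (hd1_le ω hω)).trans ?_,
    (abs_deriv2_mul_le_of_rpow_bounds hx hu hu' hv (hd1_le ω hω) hu'' hv'').trans ?_⟩ <;>
  exact mul_le_mul_of_nonneg_right (by nlinarith) (rpow_nonneg hx.le _)

/-- Let `φ ∈ (0,1/2)` and `f*` be positive, even, continuous on `[−π,π]`,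
twice differentiable off the origin with `|(f*)''(ω)| ≤ C |ω|^{−2}`.  With
`f(ω) = |1 − e^{iω}|^{−2φ} f*(ω)` there is `C' > 0` with, for `ω ≠ 0` in `[−π,π]`:
`|(f*)'(ω)| ≤ C'|ω|^{−1}`, `|f*(ω)| ≤ C'`, `|f'(ω)| ≤ C'|ω|^{−(2φ+1)}`, and
`|f''(ω)| ≤ C'|ω|^{−(2φ+2)}` (where `f'`, `f''` are first and second derivatives of `f`). -/
theorem stmt_8 (φ C : ℝ) (hφ1 : 0 < φ) (hφ2 : φ < 1 / 2) (hC : 0 < C)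
    (fstar d1 d2 : ℝ → ℝ)
    (hpos : ∀ ω ∈ Set.Icc (-Real.pi) Real.pi, 0 < fstar ω)
    (heven : ∀ ω ∈ Set.Icc (-Real.pi) Real.pi, fstar (-ω) = fstar ω)
    (hcont : ContinuousOn fstar (Set.Icc (-Real.pi) Real.pi))
    (hd1 : ∀ ω ∈ Set.Icc (-Real.pi) Real.pi \ {0},
      HasDerivWithinAt fstar (d1 ω) (Set.Icc (-Real.pi) Real.pi \ {0}) ω)
    (hd2 : ∀ ω ∈ Set.Icc (-Real.pi) Real.pi \ {0},
      HasDerivWithinAt d1 (d2 ω) (Set.Icc (-Real.pi) Real.pi \ {0}) ω)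
    (hbd2 : ∀ ω ∈ Set.Icc (-Real.pi) Real.pi \ {0}, |d2 ω| ≤ C * |ω| ^ (-(2 : ℝ))) :
    ∃ C' > 0, ∃ fd1 fd2 : ℝ → ℝ,
      (∀ ω ∈ Set.Icc (-Real.pi) Real.pi \ {0},
        HasDerivWithinAt (lmSpectral φ fstar) (fd1 ω) (Set.Icc (-Real.pi) Real.pi \ {0}) ω) ∧
      (∀ ω ∈ Set.Icc (-Real.pi) Real.pi \ {0},
        HasDerivWithinAt fd1 (fd2 ω) (Set.Icc (-Real.pi) Real.pi \ {0}) ω) ∧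
      (∀ ω ∈ Set.Icc (-Real.pi) Real.pi \ {0},
        |d1 ω| ≤ C' * |ω| ^ (-(1 : ℝ)) ∧ |fstar ω| ≤ C' ∧
        |fd1 ω| ≤ C' * |ω| ^ (-(2 * φ + 1)) ∧ |fd2 ω| ≤ C' * |ω| ^ (-(2 * φ + 2))) :=
  stmt_8_general φ C hφ1 hC fstar d1 d2 hcont hd1 hd2 hbd2
end

section
/- Let φ ∈ (0, 1/2) and let f(ω) = |1 − e^{√(−1)ω}|^{−2φ} f*(ω), where f* : [−π,π] → ℝ is positive, even, continuous, twice differentiable on [−π,0) ∪ (0,π] with |(f*)''(ω)| ≤ C|ω|^{−2} for ω ≠ 0. Then there exists a constant C' > 0 such that for all integers k ≥ 0, |(1/2π) ∫_{−π}^{π} cos(kω) f(ω) dω| ≤ C' (1 + k)^{−(1−2φ)}. In particular, the Toeplitz matrix G with entries G(i,j) = (1/2π)∫_{−π}^{π} cos(|i−j|ω) f(ω) dω satisfies |G(i,j)| ≤ C'(1 + |i−j|)^{−(1−2φ)}. -/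
open Real MeasureTheory intervalIntegral Set

theorem norm_one_sub_exp_I_mul_ofReal (ω : ℝ) :
    ‖1 - Complex.exp (Complex.I * ω)‖ = 2 * |sin (ω / 2)| := by
  rw [norm_sub_rev, Complex.norm_exp_I_mul_ofReal_sub_one, norm_mul, Real.norm_two,
    Real.norm_eq_abs]

theorem lmSpectral_neg (φ : ℝ) {fstar : ℝ → ℝ} {ω : ℝ} (h : fstar (-ω) = fstar ω) :
    lmSpectral φ fstar (-ω) = lmSpectral φ fstar ω := by
  rw [lmSpectral, lmSpectral, norm_one_sub_exp_I_mul_ofReal, norm_one_sub_exp_I_mul_ofReal,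
    neg_div, sin_neg, abs_neg, h]

theorem lmSpectral_eq_of_mem_Icc (φ : ℝ) (fstar : ℝ → ℝ) {ω : ℝ} (hω : ω ∈ Icc 0 (2 * π)) :
    lmSpectral φ fstar ω = (2 * sin (ω / 2)) ^ (-(2 * φ)) * fstar ω := by
  rw [lmSpectral, norm_one_sub_exp_I_mul_ofReal,
    abs_of_nonneg (sin_nonneg_of_nonneg_of_le_pi (by linarith [hω.1]) (by linarith [hω.2]))]

theorem two_div_pi_mul_le_two_sin_half {x : ℝ} (h0 : 0 ≤ x) (hπ : x ≤ π) :
    2 / π * x ≤ 2 * sin (x / 2) := by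
  have := mul_le_sin (x := x / 2) (by linarith) (by linarith)
  linarith

theorem two_sin_half_rpow_le {x s : ℝ} (hx : x ∈ Ioc 0 π) (hs : s ≤ 0) :
    (2 * sin (x / 2)) ^ s ≤ (2 / π) ^ s * x ^ s := by
  rw [← mul_rpow (by positivity) hx.1.le]
  exact rpow_le_rpow_of_nonpos (by have := hx.1; positivity)
    (two_div_pi_mul_le_two_sin_half hx.1.le hx.2) hs

theorem hasDerivAt_two_sin_half_rpow (s : ℝ) {x : ℝ} (hx : sin (x / 2) ≠ 0) :
    HasDerivAt (fun y ↦ (2 * sin (y / 2)) ^ s) (s * cos (x / 2) * (2 * sin (x / 2)) ^ (s - 1))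
      x := by
  have h := (((hasDerivAt_id' x).div_const 2).sin.const_mul 2).rpow_const (p := s)
    (Or.inl (mul_ne_zero two_ne_zero hx))
  convert h using 1
  ring

theorem abs_sub_le_mul_inv_sub_inv_of_abs_deriv_le {f f' : ℝ → ℝ} {b C : ℝ}
    (hf : ∀ x ∈ Ioc 0 b, HasDerivWithinAt f (f' x) (Ioc 0 b) x)
    (hbd : ∀ x ∈ Ioo 0 b, |f' x| ≤ C * x ^ (-2 : ℝ)) {x : ℝ} (hx : x ∈ Ioc 0 b) :
    |f x - f b| ≤ C * (x⁻¹ - b⁻¹) := by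
  have hinv : ∀ y ∈ Ioc 0 b, HasDerivWithinAt (fun y ↦ C * y⁻¹) (C * -(y ^ 2)⁻¹) (Ioc 0 b) y :=
    fun y hy ↦ ((hasDerivAt_inv hy.1.ne').const_mul C).hasDerivWithinAt
  have hsq : ∀ y ∈ Ioo (0 : ℝ) b, y ^ (-2 : ℝ) = (y ^ 2)⁻¹ := fun y hy ↦ by
    rw [rpow_neg hy.1.le, rpow_two]
  have hb : b ∈ Ioc 0 b := ⟨hx.1.trans_le hx.2, le_rfl⟩
  have hup : MonotoneOn (fun y ↦ f y - C * y⁻¹) (Ioc 0 b) := by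
    refine monotoneOn_of_hasDerivWithinAt_nonneg (f' := fun y ↦ f' y - C * -(y ^ 2)⁻¹)
      (convex_Ioc 0 b) (fun y hy ↦ ((hf y hy).sub (hinv y hy)).continuousWithinAt)
      (fun y hy ↦ ?_) (fun y hy ↦ ?_)
    · rw [interior_Ioc] at hy ⊢
      exact ((hf y (Ioo_subset_Ioc_self hy)).sub (hinv y (Ioo_subset_Ioc_self hy))).mono
        Ioo_subset_Ioc_self
    · rw [interior_Ioc] at hy
      have := (neg_abs_le (f' y)).trans' (neg_le_neg (hsq y hy ▸ hbd y hy))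
      linarith
  have hdown : AntitoneOn (fun y ↦ f y + C * y⁻¹) (Ioc 0 b) := by
    refine antitoneOn_of_hasDerivWithinAt_nonpos (f' := fun y ↦ f' y + C * -(y ^ 2)⁻¹)
      (convex_Ioc 0 b) (fun y hy ↦ ((hf y hy).add (hinv y hy)).continuousWithinAt)
      (fun y hy ↦ ?_) (fun y hy ↦ ?_)
    · rw [interior_Ioc] at hy ⊢
      exact ((hf y (Ioo_subset_Ioc_self hy)).add (hinv y (Ioo_subset_Ioc_self hy))).mono
        Ioo_subset_Ioc_self
    · rw [interior_Ioc] at hy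
      have := (le_abs_self (f' y)).trans (hsq y hy ▸ hbd y hy)
      linarith
  have h1 := hup hx hb hx.2
  have h2 := hdown hx hb hx.2
  simp only at h1 h2
  rw [abs_sub_le_iff]
  constructor <;> linarith

theorem abs_le_div_of_abs_deriv_le {f f' : ℝ → ℝ} {b C : ℝ} (hC : 0 ≤ C)
    (hf : ∀ x ∈ Ioc 0 b, HasDerivWithinAt f (f' x) (Ioc 0 b) x)
    (hbd : ∀ x ∈ Ioo 0 b, |f' x| ≤ C * x ^ (-2 : ℝ)) :
    ∀ x ∈ Ioc 0 b, |f x| ≤ (b * |f b| + C) / x := fun x hx ↦ by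
  have h := abs_sub_le_mul_inv_sub_inv_of_abs_deriv_le hf hbd hx
  have hb : 0 ≤ C * b⁻¹ := mul_nonneg hC (inv_nonneg.2 (hx.1.le.trans hx.2))
  rw [le_div_iff₀ hx.1]
  calc |f x| * x ≤ (|f b| + C * x⁻¹) * x :=
        mul_le_mul_of_nonneg_right (by linarith [abs_sub_abs_le_abs_sub (f x) (f b)]) hx.1.le
    _ = x * |f b| + C := by rw [add_mul, mul_assoc, inv_mul_cancel₀ hx.1.ne', mul_one, mul_comm]
    _ ≤ b * |f b| + C := by gcongr; exact hx.2

theorem integral_neg_eq_two_mul_of_even {h : ℝ → ℝ} {b : ℝ} (hb : 0 ≤ b)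
    (heven : ∀ x ∈ Icc 0 b, h (-x) = h x) (hint : IntervalIntegrable h volume 0 b) :
    ∫ x in -b..b, h x = 2 * ∫ x in 0..b, h x := by
  have hcongr : EqOn (fun x ↦ h (-x)) h (uIcc 0 b) := by
    rw [uIcc_of_le hb]; exact heven
  have hleft : IntervalIntegrable h volume (-b) 0 := by
    rw [IntervalIntegrable.iff_comp_neg, neg_neg, neg_zero]
    exact (hint.congr (hcongr.symm.mono uIoc_subset_uIcc)).symm
  rw [← integral_add_adjacent_intervals hleft hint, two_mul]
  congr 1
  rw [← neg_zero, ← integral_comp_neg, neg_zero]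
  exact integral_congr hcongr

theorem nonneg_of_abs_le_mul_rpow {y c x s : ℝ} (hx : 0 < x) (h : |y| ≤ c * x ^ s) : 0 ≤ c :=
  nonneg_of_mul_nonneg_left ((abs_nonneg y).trans h) (rpow_pos_of_pos hx s)

theorem integral_rpow_neg_sub_one_le {α a b : ℝ} (hα : 0 < α) (ha : 0 < a) (hab : a ≤ b) :
    ∫ x in a..b, x ^ (-α - 1) ≤ a ^ (-α) / α := by
  have h0 : (0 : ℝ) ∉ uIcc a b := by
    rw [uIcc_of_le hab]; exact fun h ↦ ha.not_ge h.1
  rw [integral_rpow (Or.inr ⟨by linarith, h0⟩), sub_add_cancel, div_neg, ← neg_div, neg_sub]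
  gcongr
  linarith [rpow_pos_of_pos (ha.trans_le hab) (-α)]

theorem intervalIntegrable_of_hasDerivAt_of_abs_le {f f' B : ℝ → ℝ} {a b : ℝ} (hab : a ≤ b)
    (hf : ∀ x ∈ Ioo a b, HasDerivAt f (f' x) x) (hB : IntervalIntegrable B volume a b)
    (hle : ∀ x ∈ Ioo a b, |f' x| ≤ B x) : IntervalIntegrable f' volume a b := by
  have heq : EqOn (deriv f) f' (uIoo a b) := fun x hx ↦
    (hf x (by rwa [uIoo_of_le hab] at hx)).deriv
  refine (hB.mono_fun' (measurable_deriv f).aestronglyMeasurable ?_).congr_uIoo heq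
  rw [uIoc_of_le hab, ← restrict_Ioo_eq_restrict_Ioc]
  filter_upwards [ae_restrict_mem measurableSet_Ioo] with x hx
  rw [Real.norm_eq_abs, (hf x hx).deriv]
  exact hle x hx

def HasPowerSingularity (α : ℝ) (g : ℝ → ℝ) : Prop :=
  ∃ g' : ℝ → ℝ, ∃ M E : ℝ, ∀ x ∈ Ioc 0 π,
    HasDerivWithinAt g (g' x) (Ioc 0 π) x ∧ |g x| ≤ M * x ^ (-α) ∧ |g' x| ≤ E * x ^ (-α - 1)

theorem hasPowerSingularity_two_sin_half_rpow {α : ℝ} (hα : 0 ≤ α) :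
    HasPowerSingularity α (fun x ↦ (2 * sin (x / 2)) ^ (-α)) := by
  refine ⟨fun x ↦ -α * cos (x / 2) * (2 * sin (x / 2)) ^ (-α - 1), (2 / π) ^ (-α),
    α * (2 / π) ^ (-α - 1), fun x hx ↦ ?_⟩
  have hpos : 0 < 2 * sin (x / 2) :=
    mul_pos two_pos (sin_pos_of_pos_of_lt_pi (by linarith [hx.1]) (by linarith [hx.2, pi_pos]))
  refine ⟨(hasDerivAt_two_sin_half_rpow _ (by linarith : 0 < sin (x / 2)).ne').hasDerivWithinAt,
    ?_, ?_⟩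
  · rw [abs_of_pos (rpow_pos_of_pos hpos _)]
    exact two_sin_half_rpow_le hx (by linarith)
  · simp only
    rw [abs_mul, abs_mul, abs_neg, abs_of_nonneg hα, abs_of_pos (rpow_pos_of_pos hpos _)]
    calc α * |cos (x / 2)| * (2 * sin (x / 2)) ^ (-α - 1)
        ≤ α * 1 * ((2 / π) ^ (-α - 1) * x ^ (-α - 1)) := by
          gcongr
          exacts [abs_cos_le_one _, two_sin_half_rpow_le hx (by linarith)]
      _ = α * (2 / π) ^ (-α - 1) * x ^ (-α - 1) := by ring

theorem HasPowerSingularity.mul {α B B' : ℝ} {u v v' : ℝ → ℝ} (hu : HasPowerSingularity α u)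
    (hv : ∀ x ∈ Ioc 0 π, HasDerivWithinAt v (v' x) (Ioc 0 π) x)
    (hvb : ∀ x ∈ Ioc 0 π, |v x| ≤ B) (hv'b : ∀ x ∈ Ioc 0 π, |v' x| ≤ B' / x) :
    HasPowerSingularity α (u * v) := by
  obtain ⟨u', A, A', hu⟩ := hu
  refine ⟨fun x ↦ u' x * v x + u x * v' x, A * B, A' * B + A * B', fun x hx ↦ ?_⟩
  obtain ⟨hd, hub, hu'b⟩ := hu x hx
  refine ⟨hd.mul (hv x hx), ?_, ?_⟩
  · calc |(u * v) x| = |u x| * |v x| := abs_mul _ _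
      _ ≤ A * x ^ (-α) * B :=
          mul_le_mul hub (hvb x hx) (abs_nonneg _) ((abs_nonneg _).trans hub)
      _ = A * B * x ^ (-α) := by ring
  · calc |u' x * v x + u x * v' x| ≤ |u' x| * |v x| + |u x| * |v' x| := by
          rw [← abs_mul, ← abs_mul]; exact abs_add_le _ _
      _ ≤ A' * x ^ (-α - 1) * B + A * x ^ (-α) * (B' / x) :=
          add_le_add (mul_le_mul hu'b (hvb x hx) (abs_nonneg _) ((abs_nonneg _).trans hu'b))
            (mul_le_mul hub (hv'b x hx) (abs_nonneg _) ((abs_nonneg _).trans hub))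
      _ = (A' * B + A * B') * x ^ (-α - 1) := by
          rw [rpow_sub_one hx.1.ne']; ring

theorem HasPowerSingularity.congr {α : ℝ} {g h : ℝ → ℝ} (hg : HasPowerSingularity α g)
    (heq : EqOn g h (Ioc 0 π)) : HasPowerSingularity α h := by
  obtain ⟨g', M, E, hg⟩ := hg
  refine ⟨g', M, E, fun x hx ↦ ?_⟩
  obtain ⟨hd, hb, hb'⟩ := hg x hx
  exact ⟨hd.congr (fun y hy ↦ (heq hy).symm) (heq hx).symm, heq hx ▸ hb, hb'⟩

theorem hasPowerSingularity_lmSpectral {φ F D : ℝ} (hφ : 0 ≤ φ) {fstar d1 : ℝ → ℝ}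
    (hd1 : ∀ x ∈ Ioc 0 π, HasDerivWithinAt fstar (d1 x) (Ioc 0 π) x)
    (hF : ∀ x ∈ Ioc 0 π, |fstar x| ≤ F) (hD : ∀ x ∈ Ioc 0 π, |d1 x| ≤ D / x) :
    HasPowerSingularity (2 * φ) (lmSpectral φ fstar) :=
  ((hasPowerSingularity_two_sin_half_rpow (by linarith)).mul hd1 hF hD).congr fun x hx ↦
    (lmSpectral_eq_of_mem_Icc φ fstar ⟨hx.1.le, by linarith [hx.2, pi_pos]⟩).symm

section FourierDecay

variable {α M E : ℝ} {g g' : ℝ → ℝ}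

theorem intervalIntegrable_cos_mul_of_abs_le_rpow (hα : α < 1) (hgc : ContinuousOn g (Ioc 0 π))
    (hgb : ∀ x ∈ Ioc 0 π, |g x| ≤ M * x ^ (-α)) (r : ℝ) :
    IntervalIntegrable (fun x ↦ cos (r * x) * g x) volume 0 π := by
  refine ((intervalIntegrable_rpow' (by linarith : -1 < -α)).const_mul M).mono_fun' ?_ ?_
  · rw [uIoc_of_le pi_pos.le]
    exact ((continuous_cos.comp (continuous_const.mul continuous_id)).continuousOn.mul
      hgc).aestronglyMeasurable measurableSet_Ioc
  · rw [uIoc_of_le pi_pos.le]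
    filter_upwards [ae_restrict_mem measurableSet_Ioc] with x hx
    rw [norm_mul, Real.norm_eq_abs, Real.norm_eq_abs]
    exact (mul_le_of_le_one_left (abs_nonneg _) (abs_cos_le_one _)).trans (hgb x hx)

theorem abs_integral_cos_mul_le_of_abs_le_rpow (hα : α < 1)
    (hgb : ∀ x ∈ Ioc 0 π, |g x| ≤ M * x ^ (-α)) (r : ℝ) {a : ℝ} (ha0 : 0 ≤ a) (haπ : a ≤ π) :
    |∫ x in 0..a, cos (r * x) * g x| ≤ M * a ^ (1 - α) / (1 - α) := by
  have hint : ∫ x in 0..a, M * x ^ (-α) = M * a ^ (1 - α) / (1 - α) := by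
    rw [intervalIntegral.integral_const_mul, integral_rpow (Or.inl (by linarith)), neg_add_eq_sub,
      zero_rpow (by linarith)]
    ring
  rw [← hint, ← Real.norm_eq_abs]
  refine norm_integral_le_of_norm_le ha0 (Filter.Eventually.of_forall fun x hx ↦ ?_)
    ((intervalIntegrable_rpow' (by linarith)).const_mul M)
  rw [norm_mul, Real.norm_eq_abs, Real.norm_eq_abs]
  exact (mul_le_of_le_one_left (abs_nonneg _) (abs_cos_le_one _)).trans
    (hgb x ⟨hx.1, hx.2.trans haπ⟩)

theorem abs_integral_cos_mul_le_of_hasDerivWithinAt (hα : 0 < α)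
    (hg : ∀ x ∈ Ioc 0 π, HasDerivWithinAt g (g' x) (Ioc 0 π) x ∧ |g x| ≤ M * x ^ (-α) ∧
      |g' x| ≤ E * x ^ (-α - 1))
    {r a : ℝ} (hr : 0 < r) (ha0 : 0 < a) (haπ : a ≤ π) :
    |∫ x in a..π, cos (r * x) * g x| ≤ (2 * M + E / α) * a ^ (-α) / r := by
  have hsub : Icc a π ⊆ Ioc 0 π := fun x hx ↦ ⟨ha0.trans_le hx.1, hx.2⟩
  have hderiv : ∀ x ∈ Ioo a π, HasDerivAt g (g' x) x := fun x hx ↦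
    (hg x (hsub (Ioo_subset_Icc_self hx))).1.hasDerivAt (Ioc_mem_nhds (ha0.trans hx.1) hx.2)
  have hsin : ∀ x, HasDerivAt (fun y ↦ sin (r * y) / r) (cos (r * x)) x := fun x ↦ by
    refine (((hasDerivAt_id' x).const_mul r).sin.div_const r).congr_deriv ?_
    field_simp
  have hcontsin : Continuous fun y ↦ sin (r * y) / r := by fun_prop
  have hE : 0 ≤ E := nonneg_of_abs_le_mul_rpow pi_pos (hg π ⟨pi_pos, le_rfl⟩).2.2
  have h0 : (0 : ℝ) ∉ uIcc a π := by
    rw [uIcc_of_le haπ]; exact fun h ↦ ha0.not_ge h.1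
  have hg'int : IntervalIntegrable g' volume a π :=
    intervalIntegrable_of_hasDerivAt_of_abs_le haπ hderiv
      ((intervalIntegrable_rpow (Or.inr h0)).const_mul E)
      fun x hx ↦ (hg x (hsub (Ioo_subset_Icc_self hx))).2.2
  have hibp : ∫ x in a..π, cos (r * x) * g x = g π * (sin (r * π) / r) -
      g a * (sin (r * a) / r) - ∫ x in a..π, g' x * (sin (r * x) / r) := by
    simp_rw [mul_comm (cos _)]
    refine integral_mul_deriv_eq_deriv_mul_of_hasDerivAt ?_ hcontsin.continuousOn ?_
      (fun x _ ↦ hsin x) hg'int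
      ((by fun_prop : Continuous fun x ↦ cos (r * x)).intervalIntegrable _ _)
    · rw [uIcc_of_le haπ]
      exact fun x hx ↦ (hg x (hsub hx)).1.continuousWithinAt.mono hsub
    · rwa [min_eq_left haπ, max_eq_right haπ]
  have hbdry : ∀ x ∈ Icc a π, |g x * (sin (r * x) / r)| ≤ M * a ^ (-α) / r := fun x hx ↦ by
    rw [abs_mul, abs_div, abs_of_pos hr, mul_div_assoc']
    refine div_le_div_of_nonneg_right ?_ hr.le
    calc |g x| * |sin (r * x)| ≤ M * x ^ (-α) * 1 :=
          mul_le_mul (hg x (hsub hx)).2.1 (abs_sin_le_one _) (abs_nonneg _)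
            ((abs_nonneg _).trans (hg x (hsub hx)).2.1)
      _ ≤ M * a ^ (-α) := by
          rw [mul_one]
          exact mul_le_mul_of_nonneg_left (rpow_le_rpow_of_nonpos ha0 hx.1 (by linarith))
            (nonneg_of_abs_le_mul_rpow pi_pos (hg π ⟨pi_pos, le_rfl⟩).2.1)
  have htail : |∫ x in a..π, g' x * (sin (r * x) / r)| ≤ E / α * a ^ (-α) / r := by
    rw [← Real.norm_eq_abs]
    refine (norm_integral_le_of_norm_le haπ (Filter.Eventually.of_forall fun x hx ↦ ?_)
      ((intervalIntegrable_rpow (r := -α - 1) (Or.inr h0)).const_mul (E / r))).trans ?_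
    · have hg'x := (hg x (hsub (Ioc_subset_Icc_self hx))).2.2
      rw [norm_mul, Real.norm_eq_abs, Real.norm_eq_abs, abs_div, abs_of_pos hr]
      calc |g' x| * (|sin (r * x)| / r) ≤ E * x ^ (-α - 1) * (1 / r) :=
            mul_le_mul hg'x (div_le_div_of_nonneg_right (abs_sin_le_one _) hr.le)
              (by positivity) ((abs_nonneg _).trans hg'x)
        _ = E / r * x ^ (-α - 1) := by ring
    · rw [intervalIntegral.integral_const_mul]
      calc E / r * ∫ x in a..π, x ^ (-α - 1) ≤ E / r * (a ^ (-α) / α) :=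
            mul_le_mul_of_nonneg_left (integral_rpow_neg_sub_one_le hα ha0 haπ)
              (div_nonneg hE hr.le)
        _ = E / α * a ^ (-α) / r := by ring
  rw [hibp]
  calc _ ≤ |g π * (sin (r * π) / r)| + |g a * (sin (r * a) / r)|
        + |∫ x in a..π, g' x * (sin (r * x) / r)| := by
        linarith [abs_sub (g π * (sin (r * π) / r) - g a * (sin (r * a) / r))
          (∫ x in a..π, g' x * (sin (r * x) / r)),
          abs_sub (g π * (sin (r * π) / r)) (g a * (sin (r * a) / r))]
    _ ≤ M * a ^ (-α) / r + M * a ^ (-α) / r + E / α * a ^ (-α) / r := by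
        gcongr
        exacts [hbdry π ⟨haπ, le_rfl⟩, hbdry a ⟨le_rfl, haπ⟩]
    _ = (2 * M + E / α) * a ^ (-α) / r := by ring

-- Split at `a = 1 / (1 + r)`: the singular piece and the integrated-by-parts piece balance there.
theorem abs_integral_cos_mul_le_of_one_le (hα0 : 0 < α) (hα1 : α < 1)
    (hg : ∀ x ∈ Ioc 0 π, HasDerivWithinAt g (g' x) (Ioc 0 π) x ∧ |g x| ≤ M * x ^ (-α) ∧
      |g' x| ≤ E * x ^ (-α - 1))
    {r : ℝ} (hr : 1 ≤ r) :
    |∫ x in 0..π, cos (r * x) * g x| ≤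
      (M / (1 - α) + 2 * (2 * M + E / α)) * (1 + r) ^ (-(1 - α)) := by
  set a := (1 + r)⁻¹ with ha
  have ha0 : 0 < a := by positivity
  have haπ : a ≤ π := by
    have : a ≤ 1 := inv_le_one_of_one_le₀ (by linarith)
    linarith [pi_gt_three]
  have hint := intervalIntegrable_cos_mul_of_abs_le_rpow hα1
    (fun x hx ↦ (hg x hx).1.continuousWithinAt) (fun x hx ↦ (hg x hx).2.1) r
  have hsplit := integral_add_adjacent_intervals
    (hint.mono_set (by
      rw [uIcc_of_le ha0.le, uIcc_of_le pi_pos.le]; exact Icc_subset_Icc le_rfl haπ))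
    (hint.mono_set (by
      rw [uIcc_of_le haπ, uIcc_of_le pi_pos.le]; exact Icc_subset_Icc ha0.le le_rfl))
  have hnear : a ^ (1 - α) = (1 + r) ^ (-(1 - α)) := by
    rw [ha, inv_rpow (by linarith), rpow_neg (by linarith)]
  have hfar : a ^ (-α) / r ≤ 2 * (1 + r) ^ (-(1 - α)) := by
    have : a ^ (-α) = (1 + r) ^ (-(1 - α)) * (1 + r) := by
      rw [ha, inv_rpow (by linarith), ← rpow_neg (by linarith), neg_neg,
        ← rpow_add_one (by linarith)]
      ring_nf
    rw [this, mul_div_assoc, mul_comm 2]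
    gcongr
    rw [div_le_iff₀ (by linarith)]
    linarith
  have hM : 0 ≤ M := nonneg_of_abs_le_mul_rpow pi_pos (hg π ⟨pi_pos, le_rfl⟩).2.1
  have hE : 0 ≤ E := nonneg_of_abs_le_mul_rpow pi_pos (hg π ⟨pi_pos, le_rfl⟩).2.2
  rw [← hsplit]
  calc _ ≤ |∫ x in 0..a, cos (r * x) * g x| + |∫ x in a..π, cos (r * x) * g x| := abs_add_le _ _
    _ ≤ M * a ^ (1 - α) / (1 - α) + (2 * M + E / α) * a ^ (-α) / r :=
        add_le_add
          (abs_integral_cos_mul_le_of_abs_le_rpow hα1 (fun x hx ↦ (hg x hx).2.1) r ha0.le haπ)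
          (abs_integral_cos_mul_le_of_hasDerivWithinAt hα0 hg (by linarith) ha0 haπ)
    _ ≤ M * (1 + r) ^ (-(1 - α)) / (1 - α) + (2 * M + E / α) * (2 * (1 + r) ^ (-(1 - α))) := by
        rw [hnear, mul_div_assoc (2 * M + E / α)]
        gcongr
    _ = (M / (1 - α) + 2 * (2 * M + E / α)) * (1 + r) ^ (-(1 - α)) := by ring

end FourierDecay

theorem HasPowerSingularity.intervalIntegrable_cos_mul {α : ℝ} {g : ℝ → ℝ}
    (h : HasPowerSingularity α g) (hα : α < 1) (r : ℝ) :
    IntervalIntegrable (fun x ↦ cos (r * x) * g x) volume 0 π := by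
  obtain ⟨g', M, E, hg⟩ := h
  exact intervalIntegrable_cos_mul_of_abs_le_rpow hα
    (fun x hx ↦ (hg x hx).1.continuousWithinAt) (fun x hx ↦ (hg x hx).2.1) r

theorem HasPowerSingularity.exists_abs_integral_cos_mul_le {α : ℝ} {g : ℝ → ℝ}
    (h : HasPowerSingularity α g) (hα0 : 0 < α) (hα1 : α < 1) :
    ∃ K, ∀ r, 0 ≤ r → |∫ x in 0..π, cos (r * x) * g x| ≤ K * (1 + r) ^ (-(1 - α)) := by
  obtain ⟨g', M, E, hg⟩ := h
  have hM : 0 ≤ M := nonneg_of_abs_le_mul_rpow pi_pos (hg π ⟨pi_pos, le_rfl⟩).2.1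
  have hE : 0 ≤ E := nonneg_of_abs_le_mul_rpow pi_pos (hg π ⟨pi_pos, le_rfl⟩).2.2
  have hα : 0 < 1 - α := by linarith
  refine ⟨2 * (M * π ^ (1 - α) / (1 - α)) + (M / (1 - α) + 2 * (2 * M + E / α)),
    fun r hr ↦ ?_⟩
  rcases le_total r 1 with hr1 | hr1
  · have hhalf : 1 ≤ 2 * (1 + r) ^ (-(1 - α)) := by
      have : (1 + r)⁻¹ ≤ (1 + r) ^ (-(1 - α)) := by
        rw [← rpow_neg_one]
        exact rpow_le_rpow_of_exponent_le (by linarith) (by linarith)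
      have : 1 / 2 ≤ (1 + r)⁻¹ := by
        rw [one_div]; exact inv_anti₀ (by linarith) (by linarith)
      linarith
    calc _ ≤ M * π ^ (1 - α) / (1 - α) :=
          abs_integral_cos_mul_le_of_abs_le_rpow hα1 (fun x hx ↦ (hg x hx).2.1) r
            pi_pos.le le_rfl
      _ ≤ M * π ^ (1 - α) / (1 - α) * (2 * (1 + r) ^ (-(1 - α))) :=
          le_mul_of_one_le_right (by positivity) hhalf
      _ ≤ _ := by
          rw [← mul_assoc, mul_comm _ 2]
          exact mul_le_mul_of_nonneg_right (le_add_of_nonneg_right (by positivity))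
            (by positivity)
  · exact (abs_integral_cos_mul_le_of_one_le hα0 hα1 hg hr1).trans
      (mul_le_mul_of_nonneg_right (le_add_of_nonneg_left (by positivity)) (by positivity))

theorem HasPowerSingularity.exists_abs_integral_cos_mul_le_of_even {α : ℝ} {g : ℝ → ℝ}
    (h : HasPowerSingularity α g) (hα0 : 0 < α) (hα1 : α < 1)
    (heven : ∀ x ∈ Icc 0 π, g (-x) = g x) :
    ∃ C > 0, ∀ r, 0 ≤ r →
      |1 / (2 * π) * ∫ x in (-π)..π, cos (r * x) * g x| ≤ C * (1 + r) ^ (-(1 - α)) := by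
  obtain ⟨K, hK⟩ := h.exists_abs_integral_cos_mul_le hα0 hα1
  refine ⟨max (K / π) 1, by positivity, fun r hr ↦ ?_⟩
  rw [integral_neg_eq_two_mul_of_even pi_pos.le (fun x hx ↦ by rw [mul_neg, cos_neg, heven x hx])
    (h.intervalIntegrable_cos_mul hα1 r), one_div_mul_eq_div, mul_div_mul_left _ _ two_ne_zero,
    abs_div, abs_of_pos pi_pos]
  calc _ ≤ K * (1 + r) ^ (-(1 - α)) / π := div_le_div_of_nonneg_right (hK r hr) pi_pos.le
    _ = K / π * (1 + r) ^ (-(1 - α)) := div_mul_eq_mul_div _ _ _ |>.symm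
    _ ≤ max (K / π) 1 * (1 + r) ^ (-(1 - α)) := by gcongr; exact le_max_left _ _

theorem stmt_9_general (φ C : ℝ) (hφ1 : 0 < φ) (hφ2 : φ < 1 / 2) (hC : 0 < C)
    (fstar d1 d2 : ℝ → ℝ)
    (heven : ∀ ω ∈ Set.Icc (-Real.pi) Real.pi, fstar (-ω) = fstar ω)
    (hcont : ContinuousOn fstar (Set.Icc (-Real.pi) Real.pi))
    (hd1 : ∀ ω ∈ Set.Icc (-Real.pi) Real.pi \ {0},
      HasDerivWithinAt fstar (d1 ω) (Set.Icc (-Real.pi) Real.pi \ {0}) ω)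
    (hd2 : ∀ ω ∈ Set.Icc (-Real.pi) Real.pi \ {0},
      HasDerivWithinAt d1 (d2 ω) (Set.Icc (-Real.pi) Real.pi \ {0}) ω)
    (hbd2 : ∀ ω ∈ Set.Icc (-Real.pi) Real.pi \ {0}, |d2 ω| ≤ C * |ω| ^ (-(2 : ℝ))) :
    ∃ C' > 0,
      (∀ k : ℕ,
        |(1 / (2 * Real.pi)) *
            ∫ ω in (-Real.pi)..Real.pi, Real.cos ((k : ℝ) * ω) * lmSpectral φ fstar ω|
          ≤ C' * (1 + (k : ℝ)) ^ (-(1 - 2 * φ))) ∧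
      (∀ (p : ℕ) (i j : Fin p),
        |(1 / (2 * Real.pi)) *
            ∫ ω in (-Real.pi)..Real.pi,
              Real.cos (|((i : ℕ) : ℝ) - ((j : ℕ) : ℝ)| * ω) * lmSpectral φ fstar ω|
          ≤ C' * (1 + |((i : ℕ) : ℝ) - ((j : ℕ) : ℝ)|) ^ (-(1 - 2 * φ))) := by
  have hsub : Ioc 0 π ⊆ Icc (-π) π \ {0} := fun x hx ↦
    ⟨⟨by linarith [hx.1, pi_pos], hx.2⟩, hx.1.ne'⟩
  obtain ⟨F, hF⟩ := isCompact_Icc.exists_bound_of_continuousOn hcont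
  have hsing : HasPowerSingularity (2 * φ) (lmSpectral φ fstar) :=
    hasPowerSingularity_lmSpectral hφ1.le (fun x hx ↦ (hd1 x (hsub hx)).mono hsub)
      (fun x hx ↦ hF x (hsub hx).1)
      (abs_le_div_of_abs_deriv_le hC.le (fun x hx ↦ (hd2 x (hsub hx)).mono hsub)
        fun x hx ↦ by simpa only [abs_of_pos hx.1] using hbd2 x (hsub (Ioo_subset_Ioc_self hx)))
  obtain ⟨C', hC', hG⟩ := hsing.exists_abs_integral_cos_mul_le_of_even (by linarith) (by linarith)
    fun x hx ↦ lmSpectral_neg φ (heven x ⟨by linarith [hx.1, pi_pos], hx.2⟩)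
  exact ⟨C', hC', fun k ↦ hG k k.cast_nonneg, fun p i j ↦ hG _ (abs_nonneg _)⟩

/-- Let `φ ∈ (0,1/2)` and `f(ω) = |1 − e^{iω}|^{−2φ} f*(ω)` with `f*`
positive, even, continuous, twice differentiable off `0` and `|(f*)''(ω)| ≤ C|ω|^{−2}`.
Then there is `C' > 0` with `|(1/2π) ∫_{−π}^{π} cos(kω) f(ω) dω| ≤ C' (1+k)^{−(1−2φ)}` for
all `k ≥ 0`; in particular the Toeplitz matrix `G(i,j) = (1/2π)∫ cos(|i−j|ω) f(ω) dω`
satisfies `|G(i,j)| ≤ C' (1+|i−j|)^{−(1−2φ)}`. -/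
theorem stmt_9 (φ C : ℝ) (hφ1 : 0 < φ) (hφ2 : φ < 1 / 2) (hC : 0 < C)
    (fstar d1 d2 : ℝ → ℝ)
    (hpos : ∀ ω ∈ Set.Icc (-Real.pi) Real.pi, 0 < fstar ω)
    (heven : ∀ ω ∈ Set.Icc (-Real.pi) Real.pi, fstar (-ω) = fstar ω)
    (hcont : ContinuousOn fstar (Set.Icc (-Real.pi) Real.pi))
    (hd1 : ∀ ω ∈ Set.Icc (-Real.pi) Real.pi \ {0},
      HasDerivWithinAt fstar (d1 ω) (Set.Icc (-Real.pi) Real.pi \ {0}) ω)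
    (hd2 : ∀ ω ∈ Set.Icc (-Real.pi) Real.pi \ {0},
      HasDerivWithinAt d1 (d2 ω) (Set.Icc (-Real.pi) Real.pi \ {0}) ω)
    (hbd2 : ∀ ω ∈ Set.Icc (-Real.pi) Real.pi \ {0}, |d2 ω| ≤ C * |ω| ^ (-(2 : ℝ))) :
    ∃ C' > 0,
      (∀ k : ℕ,
        |(1 / (2 * Real.pi)) *
            ∫ ω in (-Real.pi)..Real.pi, Real.cos ((k : ℝ) * ω) * lmSpectral φ fstar ω|
          ≤ C' * (1 + (k : ℝ)) ^ (-(1 - 2 * φ))) ∧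
      (∀ (p : ℕ) (i j : Fin p),
        |(1 / (2 * Real.pi)) *
            ∫ ω in (-Real.pi)..Real.pi,
              Real.cos (|((i : ℕ) : ℝ) - ((j : ℕ) : ℝ)| * ω) * lmSpectral φ fstar ω|
          ≤ C' * (1 + |((i : ℕ) : ℝ) - ((j : ℕ) : ℝ)|) ^ (-(1 - 2 * φ))) :=
  stmt_9_general φ C hφ1 hφ2 hC fstar d1 d2 heven hcont hd1 hd2 hbd2
end

section
/- Let k ≥ 1 be an integer, let b₁,...,b_k be real numbers, and let j₁ < j₂ < ... < j_k be distinct integers. Set P(ω) = Σ_{s=1}^{k} b_s e^{√(−1) j_s ω}. Then ∫_{π/(2k)}^{π} |P(ω)|² dω ≥ (π/2) Σ_{s=1}^{k} b_s². -/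
/-!
By orthogonality of the exponentials `e^{i n ω}` on `[-π, π]`, the integral of `|P|²` over
`[-π, π]` is `2π Σ b_s²`. Real coefficients make `|P|` even, so `[0, π]` carries half of it.
By Cauchy–Schwarz `|P|² ≤ k Σ b_s²` pointwise, so the piece over `[0, π/(2k)]` is at most
`(π/2) Σ b_s²`, and the rest is at least `(π/2) Σ b_s²`.
-/

open MeasureTheory intervalIntegral Complex Finset
open scoped Real ComplexConjugate

theorem integral_exp_I_int_mul (n : ℤ) :
    ∫ ω in (-π)..π, exp (I * n * ω) = if n = 0 then (2 * π : ℂ) else 0 := by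
  split_ifs with hn
  · simp [hn, two_mul]
  · have hc : I * n ≠ 0 := mul_ne_zero I_ne_zero (Int.cast_ne_zero.mpr hn)
    rw [integral_exp_mul_complex hc, div_eq_zero_iff, sub_eq_zero]
    left
    rw [exp_eq_exp_iff_exists_int]
    exact ⟨n, by push_cast; ring⟩

theorem intervalIntegral.integral_symm_eq_two_smul_of_even {E : Type*} [NormedAddCommGroup E]
    [NormedSpace ℝ E] {f : ℝ → E} {a : ℝ} (hf : ∀ x, f (-x) = f x)
    (hint : IntervalIntegrable f volume 0 a) :
    ∫ x in -a..a, f x = 2 • ∫ x in 0..a, f x := by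
  have hneg : ∫ x in -a..0, f x = ∫ x in 0..a, f x := by
    simpa [hf] using (integral_comp_neg (a := 0) (b := a) f).symm
  have hint' : IntervalIntegrable f volume (-a) 0 := by
    simpa [hf] using ((IntervalIntegrable.iff_comp_neg).mp hint).symm
  rw [← integral_add_adjacent_intervals hint' hint, hneg, two_smul]

noncomputable def trigPoly {ι : Type*} [Fintype ι] (c : ι → ℂ) (j : ι → ℤ) (ω : ℝ) :
    ℂ :=
  ∑ s, c s * exp (I * j s * ω)

section trigPoly

variable {ι : Type*} [Fintype ι] (c : ι → ℂ) (j : ι → ℤ)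

theorem continuous_trigPoly : Continuous (trigPoly c j) := by
  unfold trigPoly
  fun_prop

theorem norm_exp_I_int_mul (n : ℤ) (ω : ℝ) : ‖exp (I * n * ω)‖ = 1 := by
  rw [show I * n * ω = ((n * ω : ℝ) : ℂ) * I by push_cast; ring, norm_exp_ofReal_mul_I]

theorem norm_sq_trigPoly (ω : ℝ) :
    ((‖trigPoly c j ω‖ ^ 2 : ℝ) : ℂ) =
      ∑ s, ∑ t, c s * conj (c t) * exp (I * ((j s - j t : ℤ) : ℂ) * ω) := by
  push_cast
  rw [← mul_conj', trigPoly, map_sum, sum_mul_sum]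
  refine sum_congr rfl fun s _ => sum_congr rfl fun t _ => ?_
  rw [map_mul, ← exp_conj, mul_mul_mul_comm, ← exp_add]
  simp only [map_mul, conj_I, map_intCast, conj_ofReal]
  ring_nf

theorem integral_norm_sq_trigPoly (hj : Function.Injective j) :
    ∫ ω in (-π)..π, ‖trigPoly c j ω‖ ^ 2 = 2 * π * ∑ s, ‖c s‖ ^ 2 := by
  classical
  apply ofReal_injective
  rw [← intervalIntegral.integral_ofReal]
  simp_rw [norm_sq_trigPoly]
  rw [integral_finsetSum fun s _ => (by fun_prop : Continuous _).intervalIntegrable _ _,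
    ofReal_mul, ofReal_sum, mul_sum]
  refine sum_congr rfl fun s _ => ?_
  rw [integral_finsetSum fun t _ => (by fun_prop : Continuous _).intervalIntegrable _ _]
  simp only [intervalIntegral.integral_const_mul, integral_exp_I_int_mul, mul_ite, mul_zero,
    sub_eq_zero, hj.eq_iff, sum_ite_eq, mem_univ, if_true]
  push_cast
  rw [mul_conj']
  ring

theorem norm_sq_trigPoly_le (ω : ℝ) :
    ‖trigPoly c j ω‖ ^ 2 ≤ Fintype.card ι * ∑ s, ‖c s‖ ^ 2 := by
  have hsum : ‖trigPoly c j ω‖ ≤ ∑ s, ‖c s‖ := by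
    refine (norm_sum_le _ _).trans (sum_le_sum fun s _ => ?_)
    rw [norm_mul, norm_exp_I_int_mul, mul_one]
  calc ‖trigPoly c j ω‖ ^ 2 ≤ (∑ s, ‖c s‖) ^ 2 := by gcongr
    _ ≤ Fintype.card ι * ∑ s, ‖c s‖ ^ 2 := sq_sum_le_card_mul_sum_sq

end trigPoly

section realCoefficients

variable {ι : Type*} [Fintype ι] (b : ι → ℝ) (j : ι → ℤ)

theorem trigPoly_ofReal_neg (ω : ℝ) :
    trigPoly (fun s => (b s : ℂ)) j (-ω) = conj (trigPoly (fun s => (b s : ℂ)) j ω) := by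
  simp only [trigPoly, map_sum, map_mul, conj_ofReal, ← exp_conj, conj_I, map_intCast]
  refine sum_congr rfl fun s _ => ?_
  push_cast
  ring_nf

theorem integral_zero_pi_norm_sq_trigPoly_ofReal (hj : Function.Injective j) :
    ∫ ω in 0..π, ‖trigPoly (fun s => (b s : ℂ)) j ω‖ ^ 2 = π * ∑ s, b s ^ 2 := by
  have heven (ω : ℝ) : ‖trigPoly (fun s => (b s : ℂ)) j (-ω)‖ ^ 2 =
      ‖trigPoly (fun s => (b s : ℂ)) j ω‖ ^ 2 := by
    rw [trigPoly_ofReal_neg, norm_conj]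
  have hint :
      IntervalIntegrable (fun ω => ‖trigPoly (fun s => (b s : ℂ)) j ω‖ ^ 2) volume 0 π :=
    ((continuous_trigPoly _ j).norm.pow 2).intervalIntegrable _ _
  have hfull := integral_norm_sq_trigPoly (fun s => (b s : ℂ)) j hj
  rw [intervalIntegral.integral_symm_eq_two_smul_of_even heven hint, nsmul_eq_mul] at hfull
  simp only [Nat.cast_ofNat, norm_real, Real.norm_eq_abs, sq_abs] at hfull
  linarith

theorem sum_sq_mul_le_integral_norm_sq_trigPoly_ofReal (hj : Function.Injective j) {a : ℝ}
    (ha : 0 ≤ a) :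
    (π - Fintype.card ι * a) * ∑ s, b s ^ 2 ≤
      ∫ ω in a..π, ‖trigPoly (fun s => (b s : ℂ)) j ω‖ ^ 2 := by
  set g := fun ω => ‖trigPoly (fun s => (b s : ℂ)) j ω‖ ^ 2
  have hg : Continuous g := (continuous_trigPoly _ j).norm.pow 2
  have hhead : ∫ ω in 0..a, g ω ≤ Fintype.card ι * (a * ∑ s, b s ^ 2) := by
    have := integral_mono_on ha (hg.intervalIntegrable (μ := volume) 0 a)
      intervalIntegrable_const fun ω _ => norm_sq_trigPoly_le (fun s => (b s : ℂ)) j ω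
    simpa [sq_abs] using this
  have hsplit := integral_add_adjacent_intervals (hg.intervalIntegrable (μ := volume) 0 a)
    (hg.intervalIntegrable a π)
  rw [integral_zero_pi_norm_sq_trigPoly_ofReal b j hj] at hsplit
  linarith

end realCoefficients

/-- Let `k ≥ 1`, `b₁,...,b_k ∈ ℝ`, and `j₁ < ... < j_k` distinct integers.
With `P(ω) = Σ_s b_s e^{i j_s ω}`, one has
`∫_{π/(2k)}^{π} |P(ω)|² dω ≥ (π/2) Σ_s b_s²`. -/
theorem stmt_11 (k : ℕ) (hk : 1 ≤ k) (b : Fin k → ℝ) (j : Fin k → ℤ) (hj : StrictMono j) :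
    (Real.pi / 2) * ∑ s, (b s) ^ 2 ≤
      ∫ ω in (Real.pi / (2 * (k : ℝ)))..Real.pi,
        (‖∑ s, (b s : ℂ) *
          Complex.exp (Complex.I * ((j s : ℤ) : ℂ) * (ω : ℂ))‖) ^ 2 := by
  have hk0 : (k : ℝ) ≠ 0 := Nat.cast_ne_zero.mpr (by omega)
  calc π / 2 * ∑ s, b s ^ 2 = (π - Fintype.card (Fin k) * (π / (2 * k))) * ∑ s, b s ^ 2 := by
        rw [Fintype.card_fin]
        field_simp
        ring
    _ ≤ _ := sum_sq_mul_le_integral_norm_sq_trigPoly_ofReal b j hj.injective (by positivity)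
end

section
/- Let φ ∈ (0, 1/2), c > 0, and let f₁ : [−π, π] → [0, ∞) be an even integrable function with f₁(ω) ≥ c|ω|^{2−2φ} for all ω ∈ [−π,π]. Define H(m) = (1/2π) ∫_{−π}^{π} cos(mω) f₁(ω) dω for integers m. Then there is a constant c₁ = c₁(c, φ) > 0 such that for every integer k ≥ 1, every choice of distinct integers j₁ < ... < j_k, and every b ∈ ℝ^k: Σ_{s=1}^{k} Σ_{t=1}^{k} b_s b_t H(j_s − j_t) ≥ c₁ k^{−(2−2φ)} Σ_{s=1}^{k} b_s². -/
/-!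
The quadratic form is `(1/2π) ∫ |P|² f₁` with `P(ω) = ∑ₛ bₛ e^{i jₛ ω}`. Orthogonality gives
`∫ |P|² = 2π ∑ bₛ²`, while Cauchy–Schwarz gives `|P|² ≤ k ∑ bₛ²`, so the window `|ω| < π/(2k)`
carries at most half of that mass. Off the window `f₁ ≥ c (π/(2k))^{2-2φ}`, which yields the bound
with `c₁ = (c/2) (π/2)^{2-2φ}`.
-/

open Real MeasureTheory Finset Set

theorem integral_cos_int_mul (m : ℤ) :
    ∫ ω in (-π)..π, cos (m * ω) = if m = 0 then 2 * π else 0 := by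
  rcases eq_or_ne m 0 with rfl | hm
  · simp [two_mul]
  · have hm' : (m : ℝ) ≠ 0 := Int.cast_ne_zero.mpr hm
    rw [intervalIntegral.integral_comp_mul_left (fun x => cos x) hm', integral_cos,
      mul_neg, sin_neg, sin_int_mul_pi]
    simp [hm]

section TrigPoly

variable {ι : Type*} [Fintype ι] (j : ι → ℤ) (b : ι → ℝ)

/-- `|∑ₛ bₛ e^{i jₛ ω}|²`, written out through its real and imaginary parts. -/
noncomputable def trigPolyNormSq (ω : ℝ) : ℝ :=
  (∑ s, b s * cos (j s * ω)) ^ 2 + (∑ s, b s * sin (j s * ω)) ^ 2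

theorem trigPolyNormSq_eq_sum_sum (ω : ℝ) :
    trigPolyNormSq j b ω = ∑ s, ∑ t, b s * b t * cos (((j s - j t : ℤ) : ℝ) * ω) := by
  rw [trigPolyNormSq, sq, sq, sum_mul_sum, sum_mul_sum, ← sum_add_distrib]
  refine sum_congr rfl fun s _ => ?_
  rw [← sum_add_distrib]
  refine sum_congr rfl fun t _ => ?_
  push_cast
  rw [sub_mul, cos_sub]
  ring

theorem trigPolyNormSq_nonneg (ω : ℝ) : 0 ≤ trigPolyNormSq j b ω := by
  unfold trigPolyNormSq
  positivity

theorem trigPolyNormSq_le (ω : ℝ) :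
    trigPolyNormSq j b ω ≤ Fintype.card ι * ∑ s, b s ^ 2 := by
  have hcos := sum_mul_sq_le_sq_mul_sq univ b fun s => cos (j s * ω)
  have hsin := sum_mul_sq_le_sq_mul_sq univ b fun s => sin (j s * ω)
  have hpyth : ∑ s, cos (j s * ω) ^ 2 + ∑ s, sin (j s * ω) ^ 2 = Fintype.card ι := by
    simp [← sum_add_distrib, cos_sq_add_sin_sq]
  calc trigPolyNormSq j b ω
      ≤ (∑ s, b s ^ 2) * ∑ s, cos (j s * ω) ^ 2 + (∑ s, b s ^ 2) * ∑ s, sin (j s * ω) ^ 2 :=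
        add_le_add hcos hsin
    _ = Fintype.card ι * ∑ s, b s ^ 2 := by rw [← mul_add, hpyth, mul_comm]

@[fun_prop]
theorem continuous_trigPolyNormSq : Continuous (trigPolyNormSq j b) := by
  unfold trigPolyNormSq
  fun_prop

theorem sum_sum_mul_integral_cos_mul {f : ℝ → ℝ} {a a' : ℝ}
    (hf : IntervalIntegrable f volume a a') :
    ∑ s, ∑ t, b s * b t * ∫ ω in a..a', cos (((j s - j t : ℤ) : ℝ) * ω) * f ω =
      ∫ ω in a..a', trigPolyNormSq j b ω * f ω := by
  have hint (m : ℝ) : IntervalIntegrable (fun ω => cos (m * ω) * f ω) volume a a' :=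
    hf.continuousOn_mul (by fun_prop)
  simp_rw [trigPolyNormSq_eq_sum_sum, sum_mul, mul_assoc (b _ * b _),
    ← intervalIntegral.integral_const_mul]
  rw [intervalIntegral.integral_finsetSum fun s _ => by
    simpa only [Finset.sum_fn] using IntervalIntegrable.sum univ fun t _ =>
      (hint ((j s - j t : ℤ) : ℝ)).const_mul (b s * b t)]
  exact sum_congr rfl fun s _ =>
    (intervalIntegral.integral_finsetSum fun t _ => (hint _).const_mul _).symm

theorem integral_trigPolyNormSq (hj : Function.Injective j) :
    ∫ ω in (-π)..π, trigPolyNormSq j b ω = 2 * π * ∑ s, b s ^ 2 := by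
  have h := sum_sum_mul_integral_cos_mul j b (f := fun _ => 1) (a := -π) (a' := π)
    intervalIntegrable_const
  simp only [mul_one, integral_cos_int_mul] at h
  rw [← h, mul_sum]
  refine sum_congr rfl fun s _ => ?_
  rw [sum_eq_single_of_mem s (mem_univ s) fun t _ hts => by
    simp [sub_eq_zero, hj.eq_iff, Ne.symm hts]]
  simp only [sub_self, if_true]
  ring

end TrigPoly

theorem mul_sub_le_integral_mul {g f : ℝ → ℝ} {a δ M L : ℝ} (hδ : 0 ≤ δ) (hδa : δ ≤ a)
    (hg : Continuous g) (hg0 : ∀ ω, 0 ≤ g ω) (hgM : ∀ ω, g ω ≤ M)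
    (hf : IntegrableOn f (Icc (-a) a)) (hf0 : ∀ ω ∈ Icc (-a) a, 0 ≤ f ω) (hL : 0 ≤ L)
    (hfL : ∀ ω ∈ Icc (-a) a, δ ≤ |ω| → L ≤ f ω) :
    L * ((∫ ω in (-a)..a, g ω) - 2 * δ * M) ≤ ∫ ω in (-a)..a, g ω * f ω := by
  have ha : -a ≤ a := by linarith
  set I := Ioc (-a) a
  set T := Ioc (-δ) δ
  have hTI : T ⊆ I := Ioc_subset_Ioc (by linarith) hδa
  have hgI : IntegrableOn g I := hg.integrableOn_Icc.mono_set Ioc_subset_Icc_self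
  have hgfI : IntegrableOn (fun ω => g ω * f ω) I :=
    (hf.continuousOn_mul hg.continuousOn isCompact_Icc).mono_set Ioc_subset_Icc_self
  have hTg : ∫ ω in T, g ω ≤ 2 * δ * M := by
    calc ∫ ω in T, g ω ≤ ∫ _ in T, M :=
          setIntegral_mono_on (hgI.mono_set hTI) (integrableOn_const measure_Ioc_lt_top.ne)
            measurableSet_Ioc fun ω _ => hgM ω
      _ = 2 * δ * M := by
        rw [setIntegral_const, Real.volume_real_Ioc_of_le (by linarith), smul_eq_mul]
        ring
  have hfar : ∀ ω ∈ I \ T, L * g ω ≤ g ω * f ω := fun ω ⟨hωI, hωT⟩ => by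
    have hδω : δ ≤ |ω| := by
      simp only [T, Set.mem_Ioc, not_and_or, not_lt, not_le] at hωT
      rcases hωT with h | h
      · exact (le_neg.mpr h).trans (neg_le_abs ω)
      · exact h.le.trans (le_abs_self ω)
    rw [mul_comm L]
    exact mul_le_mul_of_nonneg_left (hfL ω (Ioc_subset_Icc_self hωI) hδω) (hg0 ω)
  rw [intervalIntegral.integral_of_le ha, intervalIntegral.integral_of_le ha]
  calc L * ((∫ ω in I, g ω) - 2 * δ * M)
      ≤ L * ((∫ ω in I, g ω) - ∫ ω in T, g ω) := by gcongr
    _ = ∫ ω in I \ T, L * g ω := by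
        rw [integral_const_mul, setIntegral_sdiff measurableSet_Ioc hgI hTI]
    _ ≤ ∫ ω in I \ T, g ω * f ω :=
        setIntegral_mono_on ((hgI.mono_set sdiff_subset).const_mul L) (hgfI.mono_set sdiff_subset)
          (measurableSet_Ioc.diff measurableSet_Ioc) hfar
    _ ≤ ∫ ω in I, g ω * f ω :=
        setIntegral_mono_set hgfI
          ((ae_restrict_iff' measurableSet_Ioc).mpr <| Filter.Eventually.of_forall fun ω hω =>
            mul_nonneg (hg0 ω) (hf0 ω (Ioc_subset_Icc_self hω)))
          sdiff_subset.eventuallyLE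

theorem stmt_12_general (φ c : ℝ) (hφ2 : φ < 1 / 2) (hc : 0 < c) :
    ∃ c₁ > 0, ∀ f₁ : ℝ → ℝ,
      (∀ ω ∈ Set.Icc (-Real.pi) Real.pi, 0 ≤ f₁ ω) →
      (∀ ω ∈ Set.Icc (-Real.pi) Real.pi, f₁ (-ω) = f₁ ω) →
      MeasureTheory.IntegrableOn f₁ (Set.Icc (-Real.pi) Real.pi) →
      (∀ ω ∈ Set.Icc (-Real.pi) Real.pi, c * |ω| ^ (2 - 2 * φ) ≤ f₁ ω) →
      ∀ k : ℕ, 1 ≤ k → ∀ j : Fin k → ℤ, StrictMono j → ∀ b : Fin k → ℝ,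
        c₁ * (k : ℝ) ^ (-(2 - 2 * φ)) * ∑ s, (b s) ^ 2 ≤
          ∑ s, ∑ t, b s * b t *
            ((1 / (2 * Real.pi)) *
              ∫ ω in (-Real.pi)..Real.pi, Real.cos (((j s - j t : ℤ) : ℝ) * ω) * f₁ ω) := by
  set α := 2 - 2 * φ
  have hα : 0 ≤ α := by linarith
  refine ⟨c / 2 * (π / 2) ^ α, by positivity, fun f₁ hf₁0 _ hf₁ hf₁c k hk j hj b => ?_⟩
  have hk0 : (0 : ℝ) < k := by exact_mod_cast hk
  set δ := π / (2 * k) with hδ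
  have hδk : 2 * δ * k = π := by rw [hδ]; field_simp
  have hδπ : δ ≤ π := div_le_self pi_pos.le (by norm_cast; omega)
  have hδα : δ ^ α = (π / 2) ^ α * (k : ℝ) ^ (-α) := by
    rw [hδ, ← div_div, div_rpow (by positivity) hk0.le, rpow_neg hk0.le, div_eq_mul_inv]
  have hquad : ∑ s, ∑ t, b s * b t *
      ((1 / (2 * π)) * ∫ ω in (-π)..π, cos (((j s - j t : ℤ) : ℝ) * ω) * f₁ ω) =
      1 / (2 * π) * ∫ ω in (-π)..π, trigPolyNormSq j b ω * f₁ ω := by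
    rw [← sum_sum_mul_integral_cos_mul j b
      ((intervalIntegrable_iff_integrableOn_Icc_of_le (by linarith [pi_pos])).mpr hf₁)]
    simp only [mul_sum, mul_left_comm]
  have hbound := mul_sub_le_integral_mul (δ := δ) (M := k * ∑ s, b s ^ 2) (L := c * δ ^ α)
    (by positivity) hδπ (continuous_trigPolyNormSq j b) (trigPolyNormSq_nonneg j b)
    (by simpa using trigPolyNormSq_le j b) hf₁ hf₁0 (by positivity)
    fun ω hω hδω => (hf₁c ω hω).trans' (by gcongr)
  rw [integral_trigPolyNormSq j b hj.injective] at hbound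
  rw [hquad]
  calc c / 2 * (π / 2) ^ α * (k : ℝ) ^ (-α) * ∑ s, b s ^ 2
      = 1 / (2 * π) * (c * δ ^ α * (2 * π * ∑ s, b s ^ 2 - 2 * δ * (k * ∑ s, b s ^ 2))) := by
        rw [hδα, ← mul_assoc (2 * δ), hδk]; field_simp; ring
    _ ≤ _ := by gcongr

/-- Let `φ ∈ (0,1/2)`, `c > 0`.  There is a constant `c₁ = c₁(c,φ) > 0`
such that for every even, nonnegative, integrable `f₁` on `[−π,π]` with
`f₁(ω) ≥ c |ω|^{2−2φ}`, defining `H(m) = (1/2π) ∫_{−π}^{π} cos(mω) f₁(ω) dω`, for every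
`k ≥ 1`, distinct integers `j₁ < ... < j_k` and `b ∈ ℝ^k`:
`Σ_s Σ_t b_s b_t H(j_s − j_t) ≥ c₁ k^{−(2−2φ)} Σ_s b_s²`. -/
theorem stmt_12 (φ c : ℝ) (hφ1 : 0 < φ) (hφ2 : φ < 1 / 2) (hc : 0 < c) :
    ∃ c₁ > 0, ∀ f₁ : ℝ → ℝ,
      (∀ ω ∈ Set.Icc (-Real.pi) Real.pi, 0 ≤ f₁ ω) →
      (∀ ω ∈ Set.Icc (-Real.pi) Real.pi, f₁ (-ω) = f₁ ω) →
      MeasureTheory.IntegrableOn f₁ (Set.Icc (-Real.pi) Real.pi) →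
      (∀ ω ∈ Set.Icc (-Real.pi) Real.pi, c * |ω| ^ (2 - 2 * φ) ≤ f₁ ω) →
      ∀ k : ℕ, 1 ≤ k → ∀ j : Fin k → ℤ, StrictMono j → ∀ b : Fin k → ℝ,
        c₁ * (k : ℝ) ^ (-(2 - 2 * φ)) * ∑ s, (b s) ^ 2 ≤
          ∑ s, ∑ t, b s * b t *
            ((1 / (2 * Real.pi)) *
              ∫ ω in (-Real.pi)..Real.pi, Real.cos (((j s - j t : ℤ) : ℝ) * ω) * f₁ ω) :=
  stmt_12_general φ c hφ2 hc
end

section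
/- Let k ≥ 2 be an integer and let ξ₁, ..., ξ_k be real numbers with |ξ_i| ≥ 1 for every i. Setting s_l = ξ_l + ξ_{l+1} + ... + ξ_k for 1 ≤ l ≤ k, one has Σ_{l=1}^{k} s_l² − (1/(k+1)) (Σ_{l=1}^{k} l·ξ_l)² ≥ (k−1)/k. In particular the left-hand side is at least 1/2. -/
/-- Let `k ≥ 2` and `ξ₁,...,ξ_k ∈ ℝ` with `|ξ_i| ≥ 1`.  With tail sums
`s_l = ξ_l + ... + ξ_k`, one has
`Σ_l s_l² − (1/(k+1)) (Σ_l l·ξ_l)² ≥ (k−1)/k ≥ 1/2`. -/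
theorem stmt_16 (k : ℕ) (hk : 2 ≤ k) (ξ : Fin k → ℝ) (hξ : ∀ i, 1 ≤ |ξ i|) :
    ((k : ℝ) - 1) / (k : ℝ) ≤
      (∑ l : Fin k, (∑ j ∈ Finset.Ici l, ξ j) ^ 2) -
        (1 / ((k : ℝ) + 1)) * (∑ l : Fin k, (((l : ℕ) : ℝ) + 1) * ξ l) ^ 2 ∧
    (1 : ℝ) / 2 ≤
      (∑ l : Fin k, (∑ j ∈ Finset.Ici l, ξ j) ^ 2) -
        (1 / ((k : ℝ) + 1)) * (∑ l : Fin k, (((l : ℕ) : ℝ) + 1) * ξ l) ^ 2 := by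
  have hkR : (2:ℝ) ≤ (k:ℝ) := by exact_mod_cast hk
  set S : Fin k → ℝ := fun l => ∑ j ∈ Finset.Ici l, ξ j with hS
  set T : ℝ := ∑ l : Fin k, (((l : ℕ) : ℝ) + 1) * ξ l with hTdef
  -- T equals the sum of tail sums
  have hTs : ∑ l : Fin k, S l = T := by
    rw [hTdef, hS]
    rw [Finset.sum_comm' (s' := fun j => Finset.Iic j) (t' := Finset.univ)
      (by intro x y; simp [Finset.mem_Ici, Finset.mem_Iic])]
    simp [Finset.sum_const, Fin.card_Iic, mul_comm]
  set m : ℝ := T / ((k:ℝ) + 1) with hm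
  set g : ℕ → ℝ := fun l => (if h : l < k then S ⟨l, h⟩ else 0) - m with hg
  have hk1 : (0:ℝ) < (k:ℝ) + 1 := by linarith
  -- the quadratic form equals a sum of squares
  have key1 : ∑ l ∈ Finset.range (k+1), g l ^ 2 =
      (∑ l : Fin k, S l ^ 2) - (1 / ((k:ℝ) + 1)) * T ^ 2 := by
    rw [Finset.sum_range_succ]
    have h1 : ∑ l ∈ Finset.range k, g l ^ 2 = ∑ l : Fin k, (S l - m) ^ 2 := by
      rw [← Fin.sum_univ_eq_sum_range (fun l => g l ^ 2) k]
      refine Finset.sum_congr rfl fun l _ => ?_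
      simp [hg, l.isLt]
    have h2 : g k = -m := by simp [hg]
    have h3 : ∑ l : Fin k, (S l - m) ^ 2
        = (∑ l : Fin k, S l ^ 2) - 2 * m * T + (k:ℝ) * m ^ 2 := by
      have : ∀ l : Fin k, (S l - m) ^ 2 = S l ^ 2 - 2 * m * S l + m ^ 2 := fun l => by ring
      rw [Finset.sum_congr rfl fun l _ => this l]
      rw [Finset.sum_add_distrib, Finset.sum_sub_distrib, ← Finset.mul_sum, hTs]
      simp [Finset.sum_const, Finset.card_univ, mul_comm]
    rw [h1, h2, h3, hm]
    field_simp
    ring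
  -- consecutive differences of g are the ξ's
  have hdiff : ∀ l < k, 1 ≤ |g l - g (l + 1)| := by
    intro l hl
    by_cases h2 : l + 1 < k
    · have hIci : (Finset.Ici (⟨l, hl⟩ : Fin k)) = insert ⟨l, hl⟩ (Finset.Ici ⟨l+1, h2⟩) := by
        ext j
        simp only [Finset.mem_Ici, Finset.mem_insert, Fin.le_def, Fin.ext_iff]
        omega
      have hnotmem : (⟨l, hl⟩ : Fin k) ∉ Finset.Ici (⟨l+1, h2⟩ : Fin k) := by
        simp [Finset.mem_Ici, Fin.le_def]
      have : g l - g (l + 1) = ξ ⟨l, hl⟩ := by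
        simp only [hg, dif_pos hl, dif_pos h2]
        rw [hS]
        simp only
        rw [hIci, Finset.sum_insert hnotmem]
        ring
      rw [this]; exact hξ _
    · have hIci : (Finset.Ici (⟨l, hl⟩ : Fin k)) = {⟨l, hl⟩} := by
        ext j
        simp only [Finset.mem_Ici, Finset.mem_singleton, Fin.le_def, Fin.ext_iff]
        omega
      have : g l - g (l + 1) = ξ ⟨l, hl⟩ := by
        simp only [hg, dif_pos hl, dif_neg h2]
        rw [hS]
        simp only
        rw [hIci, Finset.sum_singleton]
        ring
      rw [this]; exact hξ _
  -- pairwise lower bound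
  have hpair : ∀ l < k, (1:ℝ)/2 ≤ g l ^ 2 + g (l + 1) ^ 2 := by
    intro l hl
    have h := hdiff l hl
    have h2 : 1 ≤ (g l - g (l + 1)) ^ 2 := by
      have := sq_abs (g l - g (l + 1))
      nlinarith [abs_nonneg (g l - g (l + 1))]
    have hab : ∀ a b : ℝ, 1 ≤ (a - b) ^ 2 → (1:ℝ)/2 ≤ a ^ 2 + b ^ 2 := by
      intro a b hab
      nlinarith [sq_nonneg (a + b)]
    exact hab _ _ h2
  -- sum of pair bounds
  have hsum1 : (k:ℝ)/2 ≤ ∑ l ∈ Finset.range k, (g l ^ 2 + g (l + 1) ^ 2) := by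
    calc (k:ℝ)/2 = ∑ _l ∈ Finset.range k, (1:ℝ)/2 := by
          simp [Finset.sum_const]; ring
      _ ≤ _ := Finset.sum_le_sum fun l hl => hpair l (Finset.mem_range.mp hl)
  have hsum2 : ∑ l ∈ Finset.range k, (g l ^ 2 + g (l + 1) ^ 2)
      ≤ 2 * ∑ l ∈ Finset.range (k+1), g l ^ 2 := by
    rw [Finset.sum_add_distrib, two_mul]
    have hA : ∑ l ∈ Finset.range k, g l ^ 2 ≤ ∑ l ∈ Finset.range (k+1), g l ^ 2 :=
      Finset.sum_le_sum_of_subset_of_nonneg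
        (Finset.range_subset_range.mpr (by omega)) (fun i _ _ => sq_nonneg _)
    have hB : ∑ l ∈ Finset.range k, g (l + 1) ^ 2 ≤ ∑ l ∈ Finset.range (k+1), g l ^ 2 := by
      have heq : ∑ l ∈ Finset.range k, g (l + 1) ^ 2
          = ∑ l ∈ Finset.Ico 1 (k+1), g l ^ 2 := by
        rw [Finset.sum_Ico_eq_sum_range]
        simp [add_comm]
      rw [heq]
      refine Finset.sum_le_sum_of_subset_of_nonneg ?_ (fun i _ _ => sq_nonneg _)
      intro x hx
      simp only [Finset.mem_Ico, Finset.mem_range] at hx ⊢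
      omega
    linarith
  have hQ : (k:ℝ)/4 ≤ (∑ l : Fin k, S l ^ 2) - (1 / ((k:ℝ) + 1)) * T ^ 2 := by
    rw [← key1]; linarith
  have hk4 : ((k:ℝ) - 1) / (k:ℝ) ≤ (k:ℝ)/4 := by
    rw [div_le_div_iff₀ (by linarith) (by norm_num)]
    nlinarith [sq_nonneg ((k:ℝ) - 2)]
  have hhalf : (1:ℝ)/2 ≤ ((k:ℝ) - 1) / (k:ℝ) := by
    rw [div_le_div_iff₀ (by norm_num) (by linarith)]
    linarith
  exact ⟨le_trans hk4 hQ, le_trans hhalf (le_trans hk4 hQ)⟩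
end

section
/- For x > 0 define ν₁(x) = 2 + (1/4)((√x − 1/√x)₊)², ν₂(x) = 1 + x/4, ν₃(x) = 3 + (1/8)((√x − 2/√x)₊)², ν₄(x) = 3 + x/6, and ν*(x) = min{ν₁(x), ν₂(x), ν₃(x), ν₄(x)}. Then ν*(x) = 1 + x/4 for 0 < x ≤ 6 + 2√10, and ν*(x) = 3 + (1/8)(√x − 2/√x)² for x > 6 + 2√10. -/
set_option maxHeartbeats 1000000 in
/-- For `x > 0` let `ν₁(x) = 2 + (1/4)((√x − 1/√x)₊)²`,
`ν₂(x) = 1 + x/4`, `ν₃(x) = 3 + (1/8)((√x − 2/√x)₊)²`, `ν₄(x) = 3 + x/6`, and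
`ν*(x) = min{ν₁,ν₂,ν₃,ν₄}(x)`.  Then `ν*(x) = 1 + x/4` for `0 < x ≤ 6 + 2√10` and
`ν*(x) = 3 + (1/8)(√x − 2/√x)²` for `x > 6 + 2√10`.  Here `(a)₊ = max a 0`. -/
theorem stmt_17 (x : ℝ) (hx : 0 < x) :
    (x ≤ 6 + 2 * Real.sqrt 10 →
      min (min (2 + (1 / 4) * (max (Real.sqrt x - 1 / Real.sqrt x) 0) ^ 2) (1 + x / 4))
          (min (3 + (1 / 8) * (max (Real.sqrt x - 2 / Real.sqrt x) 0) ^ 2) (3 + x / 6))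
        = 1 + x / 4) ∧
    (6 + 2 * Real.sqrt 10 < x →
      min (min (2 + (1 / 4) * (max (Real.sqrt x - 1 / Real.sqrt x) 0) ^ 2) (1 + x / 4))
          (min (3 + (1 / 8) * (max (Real.sqrt x - 2 / Real.sqrt x) 0) ^ 2) (3 + x / 6))
        = 3 + (1 / 8) * (Real.sqrt x - 2 / Real.sqrt x) ^ 2) := by
  have hs : 0 < Real.sqrt x := Real.sqrt_pos.mpr hx
  have hsx : Real.sqrt x ^ 2 = x := Real.sq_sqrt hx.le
  have h10 : Real.sqrt 10 ^ 2 = 10 := Real.sq_sqrt (by norm_num)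
  have h10p : 3 ≤ Real.sqrt 10 := by nlinarith [Real.sqrt_nonneg 10]
  have h10u : Real.sqrt 10 ≤ 4 := by nlinarith [Real.sqrt_nonneg 10]
  set s := Real.sqrt x with hsdef
  have hix : x * (1 / x) = 1 := by field_simp
  have hsq1 : (s - 1 / s) ^ 2 = x - 2 + 1 / x := by
    rw [← hsx]; field_simp; ring
  have hsq2 : (s - 2 / s) ^ 2 = x - 4 + 4 / x := by
    rw [← hsx]; field_simp; ring
  have hinv : (0:ℝ) ≤ 1 / x := by positivity
  constructor
  · intro hxu
    have h1 : 1 + x / 4 ≤ 2 + (1 / 4) * (max (s - 1 / s) 0) ^ 2 := by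
      rcases le_or_gt x 4 with h | h
      · nlinarith [sq_nonneg (max (s - 1 / s) 0)]
      · have hs1 : (0:ℝ) ≤ s - 1 / s := by
          rw [sub_nonneg, div_le_iff₀ hs]; nlinarith
        rw [max_eq_left hs1, hsq1]; linarith
    have h3 : 1 + x / 4 ≤ 3 + (1 / 8) * (max (s - 2 / s) 0) ^ 2 := by
      rcases le_or_gt x 8 with h | h
      · nlinarith [sq_nonneg (max (s - 2 / s) 0)]
      · have hs2 : (0:ℝ) ≤ s - 2 / s := by
          rw [sub_nonneg, div_le_iff₀ hs]; nlinarith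
        rw [max_eq_left hs2, hsq2]
        have hA : x - 6 ≤ 2 * Real.sqrt 10 := by linarith
        have hB : -(2 * Real.sqrt 10) ≤ x - 6 := by nlinarith
        have hsqb : (x - 6) ^ 2 ≤ 40 := by nlinarith
        have key : x ^ 2 ≤ 12 * x + 4 := by nlinarith
        have hid : 3 + (1 / 8) * (x - 4 + 4 / x) =
            1 + x / 4 + (12 * x + 4 - x ^ 2) / (8 * x) := by field_simp; ring
        have hnn : 0 ≤ (12 * x + 4 - x ^ 2) / (8 * x) :=
          div_nonneg (by linarith) (by linarith)
        linarith
    have h4 : 1 + x / 4 ≤ 3 + x / 6 := by linarith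
    rw [min_eq_right h1, min_eq_left (le_min h3 h4)]
  · intro hxl
    have hx12 : (12:ℝ) ≤ x := by linarith
    have hs1 : (0:ℝ) ≤ s - 1 / s := by
      rw [sub_nonneg, div_le_iff₀ hs]; nlinarith
    have hs2 : (0:ℝ) ≤ s - 2 / s := by
      rw [sub_nonneg, div_le_iff₀ hs]; nlinarith
    rw [max_eq_left hs1, max_eq_left hs2, hsq1, hsq2]
    have ha : 2 * Real.sqrt 10 ≤ x - 6 := by linarith
    have hgeq : 40 ≤ (x - 6) ^ 2 := by nlinarith [ha, h10, Real.sqrt_nonneg 10]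
    have key : 12 * x + 4 ≤ x ^ 2 := by nlinarith
    have hCB : 3 + (1 / 8) * (x - 4 + 4 / x) ≤ 1 + x / 4 := by
      have hid : (1:ℝ) + x / 4 = 3 + (1 / 8) * (x - 4 + 4 / x) +
          (x ^ 2 - 12 * x - 4) / (8 * x) := by field_simp; ring
      have hnn : 0 ≤ (x ^ 2 - 12 * x - 4) / (8 * x) :=
        div_nonneg (by linarith) (by linarith)
      linarith
    have hCA : 3 + (1 / 8) * (x - 4 + 4 / x) ≤ 2 + (1 / 4) * (x - 2 + 1 / x) := by
      nlinarith [hix, hinv, hx12, hx, mul_pos hx hx]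
    have hCD : 3 + (1 / 8) * (x - 4 + 4 / x) ≤ 3 + x / 6 := by
      have hid : (3:ℝ) + x / 6 = 3 + (1 / 8) * (x - 4 + 4 / x) +
          (x ^ 2 + 12 * x - 12) / (24 * x) := by field_simp; ring
      have hnn : 0 ≤ (x ^ 2 + 12 * x - 12) / (24 * x) :=
        div_nonneg (by nlinarith) (by linarith)
      linarith
    rw [min_eq_left hCD, min_eq_right (le_min hCA hCB)]
end

section
/- Let θ > 0 and let v₀, v₁ ≥ 0 be real numbers; set d = v₁ − v₀. Define, for x > 0, J₁(x) = v₀θ + (1/4)((√x + dθ/√x)₊)² and J₂(x) = max{v₀, v₁}·θ + (1/4)((√x − |d|θ/√x)₊)². Then for all real numbers x ≥ y > 0, J₁(x) ≥ J₂(y). -/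
private lemma stmt_18_aux (a b c : ℝ) (ha0 : 0 < a) (hb0 : 0 < b) (hab : b ≤ a)
    (hc0 : 0 ≤ c) :
    c + (1 / 4) * (max (b - c / b) 0) ^ 2 ≤ (1 / 4) * (a + c / a) ^ 2 := by
  rcases le_or_gt (b - c / b) 0 with hneg | hpos
  · rw [max_eq_right hneg]
    have hdiff : (1 / 4) * (a + c / a) ^ 2 - (c + (1 / 4) * (0:ℝ) ^ 2) =
        (a ^ 2 - c) ^ 2 / (4 * a ^ 2) := by
      field_simp; ring
    have h0 : (0:ℝ) ≤ (a ^ 2 - c) ^ 2 / (4 * a ^ 2) := by positivity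
    linarith
  · rw [max_eq_left hpos.le]
    have hbc : c < b ^ 2 := by
      have h := (div_lt_iff₀ hb0).mp (by linarith : c / b < b)
      nlinarith
    have hdiff : (1 / 4) * (a + c / a) ^ 2 - (c + (1 / 4) * (b - c / b) ^ 2) =
        ((a ^ 2 - b ^ 2) * (a ^ 2 * b ^ 2 - c ^ 2)) / (4 * a ^ 2 * b ^ 2) := by
      field_simp; ring
    have hba : b ^ 2 ≤ a ^ 2 := by nlinarith
    have hc2 : c ^ 2 ≤ a ^ 2 * b ^ 2 := by nlinarith
    have h0 : (0:ℝ) ≤ ((a ^ 2 - b ^ 2) * (a ^ 2 * b ^ 2 - c ^ 2)) / (4 * a ^ 2 * b ^ 2) := by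
      apply div_nonneg _ (by positivity)
      apply mul_nonneg <;> linarith
    linarith

/-- Let `θ > 0`, `v₀, v₁ ≥ 0`, `d = v₁ − v₀`.  Define for `x > 0`
`J₁(x) = v₀θ + (1/4)((√x + dθ/√x)₊)²` and
`J₂(x) = max{v₀,v₁}θ + (1/4)((√x − |d|θ/√x)₊)²`.  Then `J₁(x) ≥ J₂(y)` for all
`x ≥ y > 0`.  Here `(a)₊ = max a 0`. -/
theorem stmt_18 (θ v₀ v₁ : ℝ) (hθ : 0 < θ) (hv₀ : 0 ≤ v₀) (hv₁ : 0 ≤ v₁) :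
    ∀ x y : ℝ, 0 < y → y ≤ x →
      max v₀ v₁ * θ +
          (1 / 4) * (max (Real.sqrt y - |v₁ - v₀| * θ / Real.sqrt y) 0) ^ 2 ≤
        v₀ * θ +
          (1 / 4) * (max (Real.sqrt x + (v₁ - v₀) * θ / Real.sqrt x) 0) ^ 2 := by
  intro x y hy hyx
  have hx : 0 < x := lt_of_lt_of_le hy hyx
  have ha0 : 0 < Real.sqrt x := Real.sqrt_pos.mpr hx
  have hb0 : 0 < Real.sqrt y := Real.sqrt_pos.mpr hy
  have hab : Real.sqrt y ≤ Real.sqrt x := Real.sqrt_le_sqrt hyx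
  rcases le_total v₁ v₀ with hd | hd
  · -- d ≤ 0 : both sides are of the form v₀θ + monotone expression
    have habs : |v₁ - v₀| = v₀ - v₁ := by
      rw [abs_of_nonpos (by linarith)]; ring
    rw [habs, max_eq_left hd]
    have h1 : (v₀ - v₁) * θ / Real.sqrt x ≤ (v₀ - v₁) * θ / Real.sqrt y :=
      div_le_div_of_nonneg_left (by nlinarith) hb0 hab
    have key : max (Real.sqrt y - (v₀ - v₁) * θ / Real.sqrt y) 0 ≤
        max (Real.sqrt x + (v₁ - v₀) * θ / Real.sqrt x) 0 := by
      apply max_le_max _ le_rfl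
      have h2 : Real.sqrt x + (v₁ - v₀) * θ / Real.sqrt x =
          Real.sqrt x - (v₀ - v₁) * θ / Real.sqrt x := by ring_nf
      rw [h2]; linarith
    have h0 : (0:ℝ) ≤ max (Real.sqrt y - (v₀ - v₁) * θ / Real.sqrt y) 0 :=
      le_max_right _ _
    nlinarith
  · -- d ≥ 0
    have habs : |v₁ - v₀| = v₁ - v₀ := abs_of_nonneg (by linarith)
    rw [habs, max_eq_right hd]
    have hc0 : 0 ≤ (v₁ - v₀) * θ := mul_nonneg (by linarith) hθ.le
    have key := stmt_18_aux (Real.sqrt x) (Real.sqrt y) ((v₁ - v₀) * θ) ha0 hb0 hab hc0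
    have hApos : 0 ≤ Real.sqrt x + (v₁ - v₀) * θ / Real.sqrt x := by positivity
    rw [max_eq_left hApos]
    linarith
end

section
/- Fix an integer h ≥ 1 and η = (η₁, ..., η_h) ∈ ℝ^h such that every complex root z of the characteristic polynomial φ_η(z) = 1 + η₁z + ... + η_h z^h satisfies |z| ≥ 1. For each k > h, let D̃^(k) be the (k−h)×k real matrix with D̃^(k)(i,i) = 1, D̃^(k)(i, i+l) = η_l for 1 ≤ l ≤ h, and all other entries 0, and let Null_k(η) = {ξ ∈ ℝ^k : D̃^(k)ξ = 0}, an h-dimensional subspace of ℝ^k. Then there exists a constant C_η > 0, depending only on η, and an integer n₀ such that for every n ≥ n₀ and every k ≥ n, there exists an orthonormal basis ξ^(1), ..., ξ^(h) of Null_k(η) satisfying |ξ_i^(j)|² ≤ C_η · n^{−1} for all 1 ≤ i ≤ k − n and 1 ≤ j ≤ h. -/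
/-!
Write `φ = 1 + η₁ X + ⋯ + η_h X ^ h`. Row `r` of `D̃^(k)` is the coefficient vector of `X ^ r * φ`,
so a kernel vector `v` is orthogonal to the coefficients of every multiple of `φ` of small degree.
Over `ℂ` the roots `z` of `φ` satisfy `|z| ≥ 1`; with `μ = z⁻¹` and `T ≈ n / (2h + 2)`, the factor
`1 - T⁻¹ ∑_{u=1}^T (μ X) ^ u` vanishes at `z`, so the product `W` of these factors is a multiple of
`φ` of degree `< n` whose coefficients, apart from the constant `1`, are `O(2 ^ h / T)`. Pairing the
window `v_i, …, v_{i+n-1}` with `W` gives `v_i = ∑_{j<n} (1 - W)_j v_{i+j}`, and Cauchy–Schwarz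
gives `v_i² ≤ n · O(4 ^ h / T²) = O(h² 4 ^ h / n)` for unit `v`. The kernel has dimension `h`
because the left square block of `D̃^(k)` is unitriangular, so any orthonormal basis of it works.
-/

open Matrix

/-- The banded `(k−h)×k` Toeplitz matrix `D̃^(k)` implementing the order-`h` linear filter
with coefficients `(1, η₁, ..., η_h)`: `D̃(i,i) = 1`, `D̃(i,i+l) = η_l` for `1 ≤ l ≤ h`,
and `0` elsewhere. -/
noncomputable def filterMatrix (h : ℕ) (η : Fin h → ℝ) (k : ℕ) :
    Matrix (Fin (k - h)) (Fin k) ℝ :=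
  Matrix.of fun i j =>
    if (j : ℕ) = (i : ℕ) then 1
    else if hij : (i : ℕ) < (j : ℕ) ∧ (j : ℕ) ≤ (i : ℕ) + h then
      η ⟨(j : ℕ) - (i : ℕ) - 1, by omega⟩
    else 0

open Polynomial Finset

noncomputable def pairing {R : Type*} [CommSemiring R] (f : ℕ → R) : R[X] →ₗ[R] R :=
  lsum fun j => LinearMap.mulRight R (f j)

section pairing

variable {R : Type*}

section CommSemiring
variable [CommSemiring R] (f : ℕ → R)

theorem pairing_monomial (n : ℕ) (a : R) : pairing f (monomial n a) = a * f n :=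
  sum_monomial_index _ _ (zero_mul _)

theorem pairing_X_pow (n : ℕ) : pairing f (X ^ n) = f n := by
  rw [← monomial_one_right_eq_X_pow, pairing_monomial, one_mul]

theorem pairing_X_pow_mul (n : ℕ) (p : R[X]) :
    pairing f (X ^ n * p) = pairing (fun j => f (n + j)) p := by
  induction p using Polynomial.induction_on' with
  | add p q hp hq => rw [mul_add, map_add, map_add, hp, hq]
  | monomial m a => rw [X_pow_mul_monomial, pairing_monomial, pairing_monomial, add_comm]

theorem pairing_eq_sum_range {p : R[X]} {N : ℕ} (hp : p.natDegree < N) :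
    pairing f p = ∑ j ∈ range N, p.coeff j * f j :=
  sum_over_range' p (f := fun j a => a * f j) (fun _ => zero_mul _) N hp

theorem pairing_map {S : Type*} [CommSemiring S] (φ : R →+* S) (p : R[X]) :
    pairing (φ ∘ f) (p.map φ) = φ (pairing f p) := by
  induction p using Polynomial.induction_on' with
  | add p q hp hq => rw [Polynomial.map_add, map_add, map_add, hp, hq, map_add]
  | monomial n a =>
    rw [map_monomial, pairing_monomial, pairing_monomial, map_mul, Function.comp_apply]

end CommSemiring

theorem pairing_eq_zero_of_dvd [CommRing R] [NoZeroDivisors R] {f : ℕ → R} {q p : R[X]} {M : ℕ}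
    (hq : ∀ s < M, pairing f (X ^ s * q) = 0) (hdvd : q ∣ p) (hp : p.natDegree < M) :
    pairing f p = 0 := by
  obtain ⟨Q, rfl⟩ := hdvd
  rcases eq_or_ne (q * Q) 0 with h0 | h0
  · rw [h0, map_zero]
  have hQ : Q.natDegree < M := (natDegree_le_of_dvd (dvd_mul_left Q q) h0).trans_lt hp
  rw [Q.as_sum_range' M hQ, mul_sum, map_sum]
  refine sum_eq_zero fun s hs => ?_
  rw [← C_mul_X_pow_eq_monomial, mul_left_comm, ← smul_eq_C_mul, map_smul, mul_comm,
    hq s (mem_range.mp hs), smul_zero]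

theorem norm_pairing_sq_le [SeminormedCommRing R] (f : ℕ → R) {p : R[X]} {N : ℕ}
    (hp : p.natDegree < N) :
    ‖pairing f p‖ ^ 2 ≤ (∑ j ∈ range N, ‖p.coeff j‖ ^ 2) * ∑ j ∈ range N, ‖f j‖ ^ 2 := by
  have htri : ‖pairing f p‖ ≤ ∑ j ∈ range N, ‖p.coeff j‖ * ‖f j‖ := by
    rw [pairing_eq_sum_range f hp]
    exact (norm_sum_le _ _).trans (sum_le_sum fun j _ => norm_mul_le _ _)
  exact (pow_le_pow_left₀ (norm_nonneg _) htri 2).trans (sum_mul_sq_le_sq_mul_sq _ _ _)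

end pairing

theorem norm_coeff_X_pow_mul_le {R : Type*} [SeminormedRing R] {p : R[X]} {B : ℝ}
    (hp : ∀ j, ‖p.coeff j‖ ≤ B) (n m : ℕ) : ‖(X ^ n * p).coeff m‖ ≤ B := by
  rw [coeff_X_pow_mul']
  split_ifs
  · exact hp _
  · simpa using (norm_nonneg _).trans (hp 0)

section cesaro

variable {𝕜 : Type*} [RCLike 𝕜]

/-- `X * cesaroPoly T μ` is the average of `(μ X) ^ 1, …, (μ X) ^ T`. -/
noncomputable def cesaroPoly (T : ℕ) (μ : 𝕜) : 𝕜[X] :=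
  ∑ u ∈ range T, C (μ ^ (u + 1) / T) * X ^ u

variable {T : ℕ} {μ : 𝕜}

theorem norm_pow_div_natCast_le (hμ : ‖μ‖ ≤ 1) (u : ℕ) : ‖μ ^ u / T‖ ≤ (T : ℝ)⁻¹ := by
  rw [norm_div, norm_pow, RCLike.norm_natCast, div_eq_mul_inv]
  exact mul_le_of_le_one_left (by positivity) (pow_le_one₀ (norm_nonneg _) hμ)

theorem coeff_cesaroPoly (n : ℕ) :
    (cesaroPoly T μ).coeff n = if n < T then μ ^ (n + 1) / T else 0 := by
  simp [cesaroPoly]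

theorem norm_coeff_cesaroPoly_le (hμ : ‖μ‖ ≤ 1) (n : ℕ) :
    ‖(cesaroPoly T μ).coeff n‖ ≤ (T : ℝ)⁻¹ := by
  rw [coeff_cesaroPoly]
  split_ifs
  · exact norm_pow_div_natCast_le hμ _
  · simp

theorem norm_coeff_cesaroPoly_mul_le (hμ : ‖μ‖ ≤ 1) {p : 𝕜[X]} {B : ℝ}
    (hp : ∀ j, ‖p.coeff j‖ ≤ B) (m : ℕ) : ‖(cesaroPoly T μ * p).coeff m‖ ≤ B := by
  have hterm : ∀ u ∈ range T, ‖μ ^ (u + 1) / T * (X ^ u * p).coeff m‖ ≤ (T : ℝ)⁻¹ * B :=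
    fun u _ => (norm_mul_le _ _).trans <| mul_le_mul (norm_pow_div_natCast_le hμ _)
      (norm_coeff_X_pow_mul_le hp u m) (norm_nonneg _) (by positivity)
  calc ‖(cesaroPoly T μ * p).coeff m‖
      = ‖∑ u ∈ range T, μ ^ (u + 1) / T * (X ^ u * p).coeff m‖ := by
        simp only [cesaroPoly, sum_mul, finsetSum_coeff, mul_assoc, coeff_C_mul]
    _ ≤ T * ((T : ℝ)⁻¹ * B) := by
        simpa using (norm_sum_le _ _).trans (sum_le_card_nsmul _ _ _ hterm)
    _ ≤ B := by
        rw [← mul_assoc]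
        exact mul_le_of_le_one_left ((norm_nonneg _).trans (hp 0)) mul_inv_le_one

theorem natDegree_X_mul_cesaroPoly_le : (X * cesaroPoly T μ).natDegree ≤ T := by
  rw [cesaroPoly, mul_sum]
  refine natDegree_sum_le_of_forall_le _ _ fun u hu => ?_
  rw [mul_left_comm, ← pow_succ']
  exact (natDegree_C_mul_X_pow_le _ _).trans (mem_range.mp hu)

theorem X_sub_C_dvd_one_sub_X_mul_cesaroPoly (hT : T ≠ 0) {z : 𝕜} (hz : z ≠ 0) :
    X - C z ∣ 1 - X * cesaroPoly T z⁻¹ := by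
  rw [dvd_iff_isRoot, IsRoot, eval_sub, eval_one, eval_mul, eval_X, cesaroPoly, eval_finsetSum,
    mul_sum, sub_eq_zero]
  have hterm : ∀ u ∈ range T, z * eval z (C (z⁻¹ ^ (u + 1) / T) * X ^ u) = (T : 𝕜)⁻¹ := by
    intro u _
    simp only [eval_mul, eval_C, eval_pow, eval_X]
    rw [inv_pow, pow_succ]
    field_simp
  rw [sum_congr rfl hterm, sum_const, card_range, nsmul_eq_mul,
    mul_inv_cancel₀ (by exact_mod_cast hT)]

theorem norm_coeff_one_sub_prod_le (s : Multiset 𝕜) (hs : ∀ μ ∈ s, ‖μ‖ ≤ 1) (m : ℕ) :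
    ‖(1 - (s.map fun μ => 1 - X * cesaroPoly T μ).prod).coeff m‖ ≤ (2 ^ s.card - 1) / T := by
  induction s using Multiset.induction_on generalizing m with
  | empty => simp
  | cons μ s ih =>
    have hμ := hs μ (Multiset.mem_cons_self μ s)
    have ih := ih fun ν hν => hs ν (Multiset.mem_cons_of_mem hν)
    set W := (s.map fun μ => 1 - X * cesaroPoly T μ).prod
    have hsplit : 1 - (1 - X * cesaroPoly T μ) * W
        = (1 - W) + X ^ 1 * cesaroPoly T μ - X ^ 1 * (cesaroPoly T μ * (1 - W)) := by ring
    rw [Multiset.map_cons, Multiset.prod_cons, hsplit, coeff_sub, coeff_add]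
    calc _ ≤ ‖(1 - W).coeff m‖ + ‖(X ^ 1 * cesaroPoly T μ).coeff m‖
          + ‖(X ^ 1 * (cesaroPoly T μ * (1 - W))).coeff m‖ :=
          (norm_sub_le _ _).trans (add_le_add_left (norm_add_le _ _) _)
      _ ≤ (2 ^ s.card - 1) / T + (T : ℝ)⁻¹ + (2 ^ s.card - 1) / T := by
          gcongr
          · exact ih m
          · exact norm_coeff_X_pow_mul_le (norm_coeff_cesaroPoly_le hμ) 1 m
          · exact norm_coeff_X_pow_mul_le (norm_coeff_cesaroPoly_mul_le hμ ih) 1 m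
      _ = (2 ^ (μ ::ₘ s).card - 1) / T := by
          rw [Multiset.card_cons, pow_succ]
          ring

theorem natDegree_prod_one_sub_X_mul_cesaroPoly_le (s : Multiset 𝕜) :
    (s.map fun μ => 1 - X * cesaroPoly T μ).prod.natDegree ≤ s.card * T := by
  refine (natDegree_multiset_prod_le _).trans ?_
  rw [Multiset.map_map]
  refine (Multiset.sum_le_card_nsmul _ T ?_).trans (by simp)
  simp only [Multiset.mem_map, Function.comp_apply, forall_exists_index, and_imp]
  rintro _ μ _ rfl
  exact (natDegree_sub_le _ _).trans (max_le (by simp) natDegree_X_mul_cesaroPoly_le)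

end cesaro

theorem exists_dvd_norm_coeff_one_sub_le {q : ℂ[X]} (hq : q ≠ 0) (hroots : ∀ z ∈ q.roots, 1 ≤ ‖z‖)
    {T : ℕ} (hT : T ≠ 0) :
    ∃ W : ℂ[X], q ∣ W ∧ W.natDegree ≤ q.natDegree * T ∧
      ∀ m, ‖(1 - W).coeff m‖ ≤ (2 ^ q.natDegree - 1) / T := by
  have hinv : ∀ μ ∈ q.roots.map (·⁻¹), ‖μ‖ ≤ 1 := by
    simp only [Multiset.mem_map, forall_exists_index, and_imp]
    rintro _ z hz rfl
    rw [norm_inv]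
    exact inv_le_one_of_one_le₀ (hroots z hz)
  have hcard : (q.roots.map (·⁻¹)).card = q.natDegree := by
    rw [Multiset.card_map, IsAlgClosed.card_roots_eq_natDegree]
  refine ⟨((q.roots.map (·⁻¹)).map fun μ => 1 - X * cesaroPoly T μ).prod, ?_, ?_, ?_⟩
  · have hfac := C_leadingCoeff_mul_prod_multiset_X_sub_C
      (IsAlgClosed.card_roots_eq_natDegree (p := q))
    have hunit : IsUnit (C q.leadingCoeff) := isUnit_C.mpr (leadingCoeff_ne_zero.mpr hq).isUnit
    refine (dvd_of_eq hfac.symm).trans (hunit.mul_left_dvd.mpr ?_)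
    rw [Multiset.map_map]
    refine Multiset.prod_dvd_prod_of_dvd _ _ fun z hz => X_sub_C_dvd_one_sub_X_mul_cesaroPoly hT ?_
    exact norm_pos_iff.mp (one_pos.trans_le (hroots z hz))
  · simpa [hcard] using natDegree_prod_one_sub_X_mul_cesaroPoly_le (T := T) (q.roots.map (·⁻¹))
  · simpa [hcard] using norm_coeff_one_sub_prod_le (T := T) _ hinv

section filterPoly

variable {R : Type*} [Semiring R] {h : ℕ} (η : Fin h → R)

noncomputable def filterPoly : R[X] :=
  1 + ∑ l : Fin h, C (η l) * X ^ ((l : ℕ) + 1)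

theorem coeff_filterPoly_zero : (filterPoly η).coeff 0 = 1 := by
  simp [filterPoly]

theorem coeff_filterPoly_succ (l : Fin h) : (filterPoly η).coeff ((l : ℕ) + 1) = η l := by
  simp [filterPoly, coeff_one, Fin.val_inj]

theorem filterPoly_ne_zero [Nontrivial R] : filterPoly η ≠ 0 := fun h0 => by
  simpa [h0] using coeff_filterPoly_zero η

theorem natDegree_filterPoly_le : (filterPoly η).natDegree ≤ h := by
  refine (natDegree_add_le _ _).trans (max_le (by simp) ?_)
  exact natDegree_sum_le_of_forall_le _ _ fun l _ => (natDegree_C_mul_X_pow_le _ _).trans l.2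

theorem eval_filterPoly {R : Type*} [CommSemiring R] {h : ℕ} (η : Fin h → R) (z : R) :
    (filterPoly η).eval z = 1 + ∑ l : Fin h, η l * z ^ ((l : ℕ) + 1) := by
  simp [filterPoly, eval_finsetSum]

theorem map_filterPoly {S : Type*} [Semiring S] (f : R →+* S) :
    (filterPoly η).map f = filterPoly (f ∘ η) := by
  simp [filterPoly, Polynomial.map_sum]

end filterPoly

def zeroExtend {R : Type*} [Zero R] {k : ℕ} (v : Fin k → R) (j : ℕ) : R :=
  if hj : j < k then v ⟨j, hj⟩ else 0

theorem zeroExtend_val {R : Type*} [Zero R] {k : ℕ} (v : Fin k → R) (j : Fin k) :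
    zeroExtend v j = v j :=
  dif_pos j.2

theorem sum_range_zeroExtend_sq_le {k i n : ℕ} (v : Fin k → ℝ) (hik : i + n ≤ k) :
    ∑ j ∈ range n, zeroExtend v (i + j) ^ 2 ≤ ∑ j, v j ^ 2 := by
  calc ∑ j ∈ range n, zeroExtend v (i + j) ^ 2 = ∑ j ∈ Ico i (i + n), zeroExtend v j ^ 2 := by
        rw [sum_Ico_eq_sum_range, Nat.add_sub_cancel_left]
    _ ≤ ∑ j ∈ range k, zeroExtend v j ^ 2 :=
        sum_le_sum_of_subset_of_nonneg (fun j hj => mem_range.mpr ((mem_Ico.mp hj).2.trans_le hik))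
          fun _ _ _ => sq_nonneg _
    _ = ∑ j, v j ^ 2 := by
        rw [← Fin.sum_univ_eq_sum_range (fun j => zeroExtend v j ^ 2)]
        simp only [zeroExtend_val]

section filterMatrix

variable {h : ℕ} (η : Fin h → ℝ) (k : ℕ)

theorem filterMatrix_apply (r : Fin (k - h)) (j : Fin k) :
    filterMatrix h η k r j = (X ^ (r : ℕ) * filterPoly η).coeff j := by
  rw [filterMatrix, of_apply, coeff_X_pow_mul']
  split_ifs with hjr
  · rw [hjr, Nat.sub_self, coeff_filterPoly_zero]
  · omega
  · rw [← coeff_filterPoly_succ η]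
    congr 1
    dsimp only
    omega
  · omega
  · exact (coeff_eq_zero_of_natDegree_lt ((natDegree_filterPoly_le η).trans_lt (by omega))).symm
  · rfl

theorem filterMatrix_mulVec_apply (v : Fin k → ℝ) (r : Fin (k - h)) :
    (filterMatrix h η k *ᵥ v) r = pairing (zeroExtend v) (X ^ (r : ℕ) * filterPoly η) := by
  have hdeg : (X ^ (r : ℕ) * filterPoly η).natDegree < k :=
    natDegree_mul_le.trans_lt <|
      (add_le_add (natDegree_X_pow_le _) (natDegree_filterPoly_le η)).trans_lt (by have := r.2; omega)
  rw [pairing_eq_sum_range _ hdeg, ← Fin.sum_univ_eq_sum_range (fun j => _ * zeroExtend v j)]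
  simp only [mulVec, dotProduct, filterMatrix_apply, zeroExtend_val]

theorem isUpperTriangular_filterMatrix_submatrix :
    ((filterMatrix h η k).submatrix id (Fin.castLE (Nat.sub_le k h))).IsUpperTriangular := by
  intro r c hcr
  simp only [submatrix_apply, id_eq, filterMatrix_apply, Fin.val_castLE, coeff_X_pow_mul']
  exact if_neg (not_le.mpr hcr)

theorem filterMatrix_mulVec_surjective : Function.Surjective (filterMatrix h η k).mulVec := by
  set e := Fin.castLE (Nat.sub_le k h)
  have hsq : filterMatrix h η k * (1 : Matrix (Fin k) (Fin k) ℝ).submatrix (Equiv.refl _) e =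
      (filterMatrix h η k).submatrix id e := mul_submatrix_one _ _ _
  have hunit : IsUnit ((filterMatrix h η k).submatrix id e) := by
    rw [isUnit_iff_isUnit_det,
      det_of_isUpperTriangular (isUpperTriangular_filterMatrix_submatrix η k)]
    simp [filterMatrix_apply, coeff_X_pow_mul', coeff_filterPoly_zero]
  intro w
  obtain ⟨u, hu⟩ := mulVec_surjective_iff_isUnit.mpr hunit w
  exact ⟨_ *ᵥ u, by rw [mulVec_mulVec, hsq, hu]⟩

theorem finrank_ker_filterMatrix (hk : h ≤ k) :
    Module.finrank ℝ (LinearMap.ker (filterMatrix h η k).mulVecLin) = h := by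
  have := LinearMap.finrank_range_add_finrank_ker (filterMatrix h η k).mulVecLin
  rw [LinearMap.range_eq_top.mpr (filterMatrix_mulVec_surjective η k), finrank_top,
    Module.finrank_fin_fun, Module.finrank_fin_fun] at this
  omega

end filterMatrix

theorem Matrix.exists_orthonormal_basis_ker {m n : Type*} [Fintype n] (A : Matrix m n ℝ) {d : ℕ}
    (hd : Module.finrank ℝ (LinearMap.ker A.mulVecLin) = d) :
    ∃ ξ : Fin d → n → ℝ, (∀ j, A *ᵥ ξ j = 0) ∧
      (∀ j j', ∑ i, ξ j i * ξ j' i = if j = j' then 1 else 0) ∧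
      ∀ v, A *ᵥ v = 0 → ∃ c : Fin d → ℝ, v = ∑ j, c j • ξ j := by
  set e := WithLp.linearEquiv 2 ℝ (n → ℝ)
  set S := (LinearMap.ker A.mulVecLin).comap (e : EuclideanSpace ℝ n →ₗ[ℝ] n → ℝ)
  have hS : Module.finrank ℝ S = d := by
    rw [show S = _ from Submodule.comap_equiv_eq_map_symm e _, LinearEquiv.finrank_map_eq, hd]
  set b := (stdOrthonormalBasis ℝ S).reindex (finCongr hS)
  have hmem : ∀ x : EuclideanSpace ℝ n, x ∈ S ↔ A *ᵥ e x = 0 := fun x => Iff.rfl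
  refine ⟨fun j => e (b j), fun j => (hmem _).mp (b j).2, fun j j' => ?_, fun v hv => ?_⟩
  · rw [← orthonormal_iff_ite.mp b.orthonormal j j', Submodule.coe_inner, PiLp.inner_apply]
    refine sum_congr rfl fun i _ => ?_
    simp [e, mul_comm]
  · set x : S := ⟨e.symm v, (hmem _).mpr (by simpa using hv)⟩
    refine ⟨fun j => b.repr x j, ?_⟩
    have := congrArg (fun y : S => e y) (b.sum_repr x)
    simpa [x, map_sum] using this.symm

theorem exists_reproducing_poly {h : ℕ} {φ : ℂ[X]} (hφ : φ ≠ 0) (hdeg : φ.natDegree ≤ h)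
    (hroots : ∀ z ∈ φ.roots, 1 ≤ ‖z‖) {n : ℕ} (hn : 2 * (h + 1) ≤ n) :
    ∃ p : ℂ[X], p.natDegree < n ∧
      ∑ j ∈ range n, ‖p.coeff j‖ ^ 2 ≤ 16 * (h + 1) ^ 2 * 4 ^ h / n ∧
      ∀ f : ℕ → ℂ, (∀ s < n - h, pairing f (X ^ s * φ) = 0) → f 0 = pairing f p := by
  set T := n / (2 * (h + 1))
  have hT : 1 ≤ T := (Nat.le_div_iff_mul_le (by omega)).mpr (by omega)
  have hTn : 2 * (h + 1) * T ≤ n := Nat.mul_div_le n _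
  have hnT : (n : ℝ) / T ≤ 4 * (h + 1) := by
    have : n < 2 * (h + 1) * (T + 1) := Nat.lt_mul_div_succ n (by omega)
    rw [div_le_iff₀ (by positivity)]
    exact_mod_cast (by nlinarith [Nat.mul_le_mul_left (2 * (h + 1)) hT] : n ≤ 4 * (h + 1) * T)
  obtain ⟨W, hφW, hWdeg, hWcoeff⟩ := exists_dvd_norm_coeff_one_sub_le hφ hroots (T := T) (by omega)
  have hWdeg' : W.natDegree + h < n := by nlinarith [Nat.mul_le_mul_right T hdeg]
  refine ⟨1 - W, (natDegree_sub_le _ _).trans_lt (by rw [natDegree_one]; omega), ?_, fun f hf => ?_⟩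
  · have hB : ∀ j, ‖(1 - W).coeff j‖ ^ 2 ≤ (2 ^ h / T) ^ 2 := fun j => by
      refine pow_le_pow_left₀ (norm_nonneg _) ((hWcoeff j).trans ?_) 2
      gcongr
      exact (sub_le_self _ zero_le_one).trans (pow_le_pow_right₀ one_le_two hdeg)
    refine (sum_le_card_nsmul (range n) _ _ fun j _ => hB j).trans ?_
    rw [card_range, nsmul_eq_mul, le_div_iff₀ (by exact_mod_cast (by omega : 0 < n))]
    calc (n : ℝ) * (2 ^ h / T) ^ 2 * n = ((n : ℝ) / T) ^ 2 * ((2 : ℝ) ^ h) ^ 2 := by ring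
      _ ≤ (4 * ((h : ℝ) + 1)) ^ 2 * ((2 : ℝ) ^ h) ^ 2 := by gcongr
      _ = 16 * ((h : ℝ) + 1) ^ 2 * 4 ^ h := by rw [sq ((2 : ℝ) ^ h), ← mul_pow]; ring
  · rw [map_sub, pairing_eq_zero_of_dvd hf hφW (by omega), sub_zero, ← pow_zero (X : ℂ[X]),
      pairing_X_pow]

theorem pairing_shift_filterPoly_eq_zero {h k : ℕ} {η : Fin h → ℝ} {v : Fin k → ℝ}
    (hv : filterMatrix h η k *ᵥ v = 0) {i s : ℕ} (hs : i + s < k - h) :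
    pairing (Complex.ofRealHom ∘ fun j => zeroExtend v (i + j))
      (X ^ s * filterPoly fun l => (η l : ℂ)) = 0 := by
  have hrow := congrFun hv ⟨i + s, hs⟩
  rw [filterMatrix_mulVec_apply, pow_add, mul_assoc, pairing_X_pow_mul] at hrow
  rw [show (filterPoly fun l => (η l : ℂ)) = (filterPoly η).map Complex.ofRealHom by
      rw [map_filterPoly]; rfl,
    ← Polynomial.map_X Complex.ofRealHom, ← Polynomial.map_pow, ← Polynomial.map_mul, pairing_map]
  simpa using hrow

theorem sq_le_of_filterMatrix_mulVec_eq_zero {h : ℕ} {η : Fin h → ℝ}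
    (hroots : ∀ z ∈ (filterPoly fun l => (η l : ℂ)).roots, 1 ≤ ‖z‖) {k n : ℕ}
    (hn : 2 * (h + 1) ≤ n) {v : Fin k → ℝ} (hv : filterMatrix h η k *ᵥ v = 0) (i : Fin k)
    (hi : (i : ℕ) + n < k) :
    v i ^ 2 ≤ 16 * (h + 1) ^ 2 * 4 ^ h / n * ∑ j, v j ^ 2 := by
  obtain ⟨p, hpdeg, hpsum, hrepr⟩ :=
    exists_reproducing_poly (filterPoly_ne_zero _) (natDegree_filterPoly_le _) hroots hn
  set g : ℕ → ℂ := Complex.ofRealHom ∘ fun j => zeroExtend v (i + j)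
  have hvi : (v i : ℂ) = pairing g p := by
    rw [← hrepr g fun s hs => pairing_shift_filterPoly_eq_zero hv (by omega)]
    simp [g, zeroExtend_val]
  have hg : ∑ j ∈ range n, ‖g j‖ ^ 2 ≤ ∑ j, v j ^ 2 := by
    simpa [g] using sum_range_zeroExtend_sq_le v hi.le
  calc v i ^ 2 = ‖pairing g p‖ ^ 2 := by rw [← hvi, Complex.norm_real, Real.norm_eq_abs, sq_abs]
    _ ≤ (∑ j ∈ range n, ‖p.coeff j‖ ^ 2) * ∑ j ∈ range n, ‖g j‖ ^ 2 := norm_pairing_sq_le _ hpdeg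
    _ ≤ 16 * (h + 1) ^ 2 * 4 ^ h / n * ∑ j, v j ^ 2 :=
        mul_le_mul hpsum hg (sum_nonneg fun _ _ => sq_nonneg _) (by positivity)

theorem stmt_19_general (h : ℕ) (η : Fin h → ℝ)
    (hroots : ∀ z : ℂ,
      (1 : ℂ) + ∑ l : Fin h, (η l : ℂ) * z ^ ((l : ℕ) + 1) = 0 → 1 ≤ ‖z‖) :
    ∃ C > 0, ∃ n₀ : ℕ, ∀ n ≥ n₀, ∀ k ≥ n,
      ∃ ξ : Fin h → (Fin k → ℝ),
        (∀ j, filterMatrix h η k *ᵥ ξ j = 0) ∧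
        (∀ j j', ∑ i, ξ j i * ξ j' i = if j = j' then 1 else 0) ∧
        (∀ v : Fin k → ℝ, filterMatrix h η k *ᵥ v = 0 →
          ∃ c : Fin h → ℝ, v = ∑ j, c j • ξ j) ∧
        (∀ i : Fin k, (i : ℕ) < k - n → ∀ j, (ξ j i) ^ 2 ≤ C / (n : ℝ)) := by
  have hroots' : ∀ z ∈ (filterPoly fun l => (η l : ℂ)).roots, 1 ≤ ‖z‖ := fun z hz =>
    hroots z (by simpa [eval_filterPoly] using (mem_roots'.mp hz).2)
  refine ⟨16 * (h + 1) ^ 2 * 4 ^ h, by positivity, 2 * (h + 1), fun n hn k hk => ?_⟩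
  obtain ⟨ξ, hker, horth, hspan⟩ :=
    (filterMatrix h η k).exists_orthonormal_basis_ker (finrank_ker_filterMatrix η k (by omega))
  refine ⟨ξ, hker, horth, hspan, fun i hi j => ?_⟩
  have hunit : ∑ i, ξ j i ^ 2 = 1 := by simpa [sq] using horth j j
  calc ξ j i ^ 2 ≤ 16 * (h + 1) ^ 2 * 4 ^ h / n * ∑ i, ξ j i ^ 2 :=
        sq_le_of_filterMatrix_mulVec_eq_zero hroots' hn (hker j) i (by omega)
    _ = 16 * (h + 1) ^ 2 * 4 ^ h / n := by rw [hunit, mul_one]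

/-- Fix `h ≥ 1` and `η ∈ ℝ^h` such that every complex root `z` of
`φ_η(z) = 1 + η₁ z + ... + η_h z^h` satisfies `|z| ≥ 1`.  Let `Null_k(η)` be the kernel of
`D̃^(k)`.  Then there exist `C_η > 0` and `n₀` such that for every `n ≥ n₀` and `k ≥ n`
there is an orthonormal basis `ξ^(1), ..., ξ^(h)` of `Null_k(η)` with
`|ξ_i^(j)|² ≤ C_η n^{−1}` for all `1 ≤ i ≤ k − n` and `1 ≤ j ≤ h`. -/
theorem stmt_19 (h : ℕ) (hh : 1 ≤ h) (η : Fin h → ℝ)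
    (hroots : ∀ z : ℂ,
      (1 : ℂ) + ∑ l : Fin h, (η l : ℂ) * z ^ ((l : ℕ) + 1) = 0 → 1 ≤ ‖z‖) :
    ∃ C > 0, ∃ n₀ : ℕ, ∀ n ≥ n₀, ∀ k ≥ n,
      ∃ ξ : Fin h → (Fin k → ℝ),
        (∀ j, filterMatrix h η k *ᵥ ξ j = 0) ∧
        (∀ j j', ∑ i, ξ j i * ξ j' i = if j = j' then 1 else 0) ∧
        (∀ v : Fin k → ℝ, filterMatrix h η k *ᵥ v = 0 →
          ∃ c : Fin h → ℝ, v = ∑ j, c j • ξ j) ∧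
        (∀ i : Fin k, (i : ℕ) < k - n → ∀ j, (ξ j i) ^ 2 ≤ C / (n : ℝ)) :=
  stmt_19_general h η hroots
end
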